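/- arXiv:2003.05578 — 6 statements merged into one kernel-verified Lean document; each statement's English description precedes it below -/
import Mathlib

section
/- There exists a function f : ℝ → ℕ such that for every real number λ with −2 < λ ≤ −1, every connected signed graph S on a finite nonempty vertex set satisfying λ_min(S) ≥ λ and δ(S) ≥ f(λ) is switching equivalent to a complete graph (and hence λ_min(S) = −1). -/
open Filter Matrix

/-- The smallest eigenvalue of a (Hermitian) real matrix. -/
noncomputable def lmin {V : Type*} [Fintype V] [DecidableEq V] (A : Matrix V V ℝ) : ℝ :=
  if h : A.IsHermitian then ⨅ i, h.eigenvalues i else 0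

/-- The smallest eigenvalue of a Hermitian complex matrix. -/
noncomputable def lminC {V : Type*} [Fintype V] [DecidableEq V] (A : Matrix V V ℂ) : ℝ :=
  if h : A.IsHermitian then ⨅ i, h.eigenvalues i else 0

/-- The largest eigenvalue of a Hermitian complex matrix. -/
noncomputable def lmaxC {V : Type*} [Fintype V] [DecidableEq V] (A : Matrix V V ℂ) : ℝ :=
  if h : A.IsHermitian then ⨆ i, h.eigenvalues i else 0

/-- Minimum degree of a finite simple graph. -/
noncomputable def minDeg {V : Type*} [Fintype V] (G : SimpleGraph V) : ℕ :=
  @SimpleGraph.minDegree V G _ (Classical.decRel _)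

/-- Real adjacency matrix of a finite simple graph. -/
noncomputable def adjMat {V : Type*} [Fintype V] (G : SimpleGraph V) : Matrix V V ℝ :=
  @SimpleGraph.adjMatrix ℝ V G (Classical.decRel _) _ _

/-- `B = D P A Pᵀ D` for a permutation (given by the bijection `σ`) and a
`±1` diagonal matrix `D` (given by `d`). -/
def SwitchEquiv {V W : Type*} (A : Matrix V V ℝ) (B : Matrix W W ℝ) : Prop :=
  ∃ (σ : W ≃ V) (d : W → ℝ), (∀ i, d i = 1 ∨ d i = -1) ∧
    ∀ u v, B u v = d u * A (σ u) (σ v) * d v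

section Aux

open Finset

set_option linter.unusedSectionVars false
set_option linter.unusedVariables false
set_option maxHeartbeats 4000000

variable {V : Type} [Fintype V] [DecidableEq V]

/-! ### Spectral lemmas -/

lemma evec_norm (A : Matrix V V ℝ) (hA : A.IsHermitian) (i : V) :
    ∑ j, (⇑(hA.eigenvectorBasis i) j)^2 = 1 := by
  have h := hA.eigenvectorBasis.orthonormal.1 i
  have h2 := EuclideanSpace.norm_eq (hA.eigenvectorBasis i)
  rw [h] at h2
  have h3 : ∑ j, ‖(hA.eigenvectorBasis i) j‖^2 = 1 := Real.sqrt_eq_one.mp h2.symm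
  simpa [Real.norm_eq_abs, sq_abs] using h3

lemma star_real (U : Matrix V V ℝ) : star U = Uᵀ := by
  ext i j; simp [Matrix.star_eq_conjTranspose, Matrix.conjTranspose_apply]

lemma vecMul_eq (U : Matrix V V ℝ) (c : V → ℝ) : c ᵥ* U = Uᵀ *ᵥ c := by
  rw [← transpose_transpose U, vecMul_transpose, transpose_transpose]

lemma quad_eq_sum (A : Matrix V V ℝ) (hA : A.IsHermitian) (c : V → ℝ) :
    c ⬝ᵥ (A *ᵥ c) = ∑ i, hA.eigenvalues i * ((star (hA.eigenvectorUnitary : Matrix V V ℝ) *ᵥ c) i)^2 := by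
  set U : Matrix V V ℝ := (hA.eigenvectorUnitary : Matrix V V ℝ) with hU
  set y := star U *ᵥ c with hy
  calc c ⬝ᵥ (A *ᵥ c)
      = c ⬝ᵥ ((U * (diagonal (RCLike.ofReal ∘ hA.eigenvalues)) * star U) *ᵥ c) := by
        conv_lhs => rw [hA.spectral_theorem]
        rw [Unitary.conjStarAlgAut_apply]
    _ = ∑ i, hA.eigenvalues i * (y i)^2 := by
        rw [← mulVec_mulVec, ← mulVec_mulVec, Matrix.dotProduct_mulVec, vecMul_eq,
          ← star_real, ← hy]
        simp [dotProduct, mulVec_diagonal, Function.comp]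
        exact Finset.sum_congr rfl fun i _ => by ring

lemma normsq_eq_sum (A : Matrix V V ℝ) (hA : A.IsHermitian) (c : V → ℝ) :
    ∑ i, (c i)^2 = ∑ i, ((star (hA.eigenvectorUnitary : Matrix V V ℝ) *ᵥ c) i)^2 := by
  set U : Matrix V V ℝ := (hA.eigenvectorUnitary : Matrix V V ℝ) with hU
  set y := star U *ᵥ c with hy
  have h1 : U * star U = 1 := (Matrix.mem_unitaryGroup_iff).mp hA.eigenvectorUnitary.2
  have e1 : ∀ d : V → ℝ, d ⬝ᵥ d = ∑ i, (d i)^2 := fun d => by simp [dotProduct, sq]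
  have : y ⬝ᵥ y = c ⬝ᵥ c := by
    calc y ⬝ᵥ y = (star U *ᵥ c) ⬝ᵥ y := by rw [hy]
      _ = c ⬝ᵥ (U *ᵥ y) := by
          rw [star_real, ← vecMul_eq, ← Matrix.dotProduct_mulVec]
      _ = c ⬝ᵥ ((U * star U) *ᵥ c) := by rw [hy, mulVec_mulVec]
      _ = c ⬝ᵥ c := by rw [h1, one_mulVec]
  rw [← e1, ← e1, this]

lemma lmin_eq (A : Matrix V V ℝ) (hA : A.IsHermitian) : lmin A = ⨅ i, hA.eigenvalues i :=
  dif_pos hA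

lemma lmin_le_eigen [Nonempty V] (A : Matrix V V ℝ) (hA : A.IsHermitian) (i : V) :
    lmin A ≤ hA.eigenvalues i := by
  rw [lmin_eq A hA]
  exact ciInf_le (Finite.bddBelow_range _) i

lemma le_lmin [Nonempty V] (A : Matrix V V ℝ) (hA : A.IsHermitian) (t : ℝ)
    (h : ∀ i, t ≤ hA.eigenvalues i) : t ≤ lmin A := by
  rw [lmin_eq A hA]; exact le_ciInf h

lemma eigen_quad (A : Matrix V V ℝ) (hA : A.IsHermitian) (i : V) :
    hA.eigenvalues i = (⇑(hA.eigenvectorBasis i) : V → ℝ) ⬝ᵥ (A *ᵥ ⇑(hA.eigenvectorBasis i)) := by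
  simpa using hA.eigenvalues_eq i

lemma det_add_one (A : Matrix V V ℝ) (hA : A.IsHermitian) :
    det (A + 1) = ∏ i, (hA.eigenvalues i + 1) := by
  set U : Matrix V V ℝ := (hA.eigenvectorUnitary : Matrix V V ℝ) with hU
  have h1 : U * star U = 1 := (Matrix.mem_unitaryGroup_iff).mp hA.eigenvectorUnitary.2
  have key : A + 1 = U * (diagonal (fun i => hA.eigenvalues i + 1)) * star U := by
    have : (diagonal (fun i => hA.eigenvalues i + 1) : Matrix V V ℝ)
        = diagonal (RCLike.ofReal ∘ hA.eigenvalues) + 1 := by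
      ext i j; by_cases h : i = j <;> simp [diagonal, h, Matrix.one_apply]
    rw [this, Matrix.mul_add, Matrix.add_mul, mul_one, h1]
    conv_lhs => rw [hA.spectral_theorem]
    rw [Unitary.conjStarAlgAut_apply]
  rw [key, det_mul, det_mul, det_diagonal]
  have h2 : det U * det (star U) = 1 := by rw [← det_mul, h1, det_one]
  rw [mul_right_comm, h2, one_mul]

/-! ### Sum helper lemmas -/

lemma sum3 {M : Type*} [AddCommMonoid M] (x y z : V) (hxy : x≠y) (hxz : x≠z) (hyz : y≠z)
    (f : V → M) : ∑ i ∈ ({x,y,z} : Finset V), f i = f x + f y + f z := by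
  rw [show ({x,y,z} : Finset V) = insert x (insert y {z}) from rfl,
    Finset.sum_insert (by simp [hxy, hxz]), Finset.sum_insert (by simp [hyz]),
    Finset.sum_singleton, add_assoc]

lemma sum4 {M : Type*} [AddCommMonoid M] (x y z w : V) (hxy : x≠y) (hxz : x≠z) (hxw : x≠w)
    (hyz : y≠z) (hyw : y≠w) (hzw : z≠w) (f : V → M) :
    ∑ i ∈ ({x,y,z,w} : Finset V), f i = f x + f y + f z + f w := by
  rw [show ({x,y,z,w} : Finset V) = insert x (insert y (insert z {w})) from rfl,
    Finset.sum_insert (by simp [hxy, hxz, hxw]), Finset.sum_insert (by simp [hyz, hyw]),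
    Finset.sum_insert (by simp [hzw]), Finset.sum_singleton]
  simp [add_assoc]

lemma quadform_restrict (A : Matrix V V ℝ) (S : Finset V) (coef : V → ℝ) :
    (∑ i, ∑ j, (if i ∈ S then coef i else 0) * A i j * (if j ∈ S then coef j else 0))
      = ∑ i ∈ S, ∑ j ∈ S, coef i * A i j * coef j := by
  rw [← Finset.sum_subset (Finset.subset_univ S) (by intro i _ hi; simp [hi])]
  refine Finset.sum_congr rfl fun i hi => ?_
  rw [← Finset.sum_subset (Finset.subset_univ S) (by intro j _ hj; simp [hj])]
  refine Finset.sum_congr rfl fun j hj => by simp [hi, hj]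

lemma sq_restrict (S : Finset V) (coef : V → ℝ) :
    (∑ i, (if i ∈ S then coef i else 0)^2) = ∑ i ∈ S, coef i ^2 := by
  rw [← Finset.sum_subset (Finset.subset_univ S) (by intro i _ hi; simp [hi])]
  exact Finset.sum_congr rfl fun i hi => by simp [hi]

lemma dot_expand (A : Matrix V V ℝ) (c : V → ℝ) :
    c ⬝ᵥ (A *ᵥ c) = ∑ i, ∑ j, c i * A i j * c j := by
  simp [dotProduct, mulVec, Finset.mul_sum, mul_assoc]

/-- The master Rayleigh inequality for restricted quadratic forms. -/
lemma rayleigh_key [Nonempty V] (A : Matrix V V ℝ) (hA : A.IsHermitian) (lam : ℝ)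
    (hm : lam ≤ lmin A) :
    ∀ (S : Finset V) (coef : V → ℝ),
      lam * ∑ i ∈ S, coef i^2 ≤ ∑ i ∈ S, ∑ j ∈ S, coef i * A i j * coef j := by
  intro S coef
  set c : V → ℝ := fun v => if v ∈ S then coef v else 0 with hc
  have h1 : c ⬝ᵥ (A *ᵥ c) = ∑ i ∈ S, ∑ j ∈ S, coef i * A i j * coef j := by
    rw [dot_expand, ← quadform_restrict A S coef]
  have h2 : ∑ i, (c i)^2 = ∑ i ∈ S, coef i ^2 := sq_restrict S coef
  have h3 : lam * ∑ i, (c i)^2 ≤ c ⬝ᵥ (A *ᵥ c) := by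
    rw [quad_eq_sum A hA c, normsq_eq_sum A hA c, Finset.mul_sum]
    apply Finset.sum_le_sum
    intro i _
    have hev : lam ≤ hA.eigenvalues i := hm.trans (lmin_le_eigen A hA i)
    have := sq_nonneg ((star (hA.eigenvectorUnitary : Matrix V V ℝ) *ᵥ c) i)
    nlinarith [hev, this]
  rw [← h2, ← h1]; exact h3
section Comb

variable (A : Matrix V V ℝ) (lam : ℝ)
variable (hsym : ∀ u v, A u v = A v u)
variable (hdiag : ∀ i, A i i = 0)
variable (hrange : ∀ u v, A u v = 0 ∨ A u v = 1 ∨ A u v = -1)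
variable (hlam2 : -2 < lam) (hlam1 : lam ≤ -1)
variable (hkey : ∀ (S : Finset V) (coef : V → ℝ),
  lam * ∑ i ∈ S, coef i^2 ≤ ∑ i ∈ S, ∑ j ∈ S, coef i * A i j * coef j)

include hsym hdiag hrange hlam2 hlam1 hkey in
lemma sq_one {u v : V} (h : A u v ≠ 0) : A u v * A u v = 1 := by
  rcases hrange u v with h1 | h1 | h1 <;> simp [h1] at h ⊢

include hsym hdiag hrange hlam2 hlam1 hkey in
lemma ne_of_edge {u v : V} (h : A u v ≠ 0) : u ≠ v := by
  rintro rfl; exact h (hdiag u)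

include hsym hdiag hrange hlam2 hlam1 hkey in
lemma triangle {x y z : V} (hxy : A x y ≠ 0) (hyz : A y z ≠ 0) (hxz : A x z ≠ 0) :
    A x y * A y z * A x z = 1 := by
  have hxy1 := sq_one A lam hsym hdiag hrange hlam2 hlam1 hkey hxy
  have hyz1 := sq_one A lam hsym hdiag hrange hlam2 hlam1 hkey hyz
  have hxz1 := sq_one A lam hsym hdiag hrange hlam2 hlam1 hkey hxz
  by_contra hne
  have hprod : A x y * A y z * A x z = -1 := by
    rcases hrange x y with h|h|h <;> rcases hrange y z with h'|h'|h' <;>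
      rcases hrange x z with h''|h''|h'' <;> simp [h, h', h''] at hxy hyz hxz hne ⊢ <;> norm_num
  have hxyne : x ≠ y := ne_of_edge A lam hsym hdiag hrange hlam2 hlam1 hkey hxy
  have hyzne : y ≠ z := ne_of_edge A lam hsym hdiag hrange hlam2 hlam1 hkey hyz
  have hxzne : x ≠ z := ne_of_edge A lam hsym hdiag hrange hlam2 hlam1 hkey hxz
  set coef : V → ℝ := fun v => if v = x then 1 else if v = y then -A x y else -A x z with hcoef
  have key := hkey {x, y, z} coef
  simp only [sum3 x y z hxyne hxzne hyzne] at key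
  have cx : coef x = 1 := by simp [hcoef]
  have cy : coef y = -A x y := by simp [hcoef, hxyne.symm]
  have cz : coef z = -A x z := by simp [hcoef, hxzne.symm, hyzne.symm]
  rw [cx, cy, cz, hdiag x, hdiag y, hdiag z, hsym y x, hsym z x, hsym z y] at key
  nlinarith [key, hprod, hxy1, hyz1, hxz1, hlam2]

include hsym hdiag hrange hlam2 hlam1 hkey in
lemma fourpt {x y z w : V} (hxy : x ≠ y) (h0 : A x y = 0)
    (hxz : A x z ≠ 0) (hyz : A y z ≠ 0) (hxw : A x w ≠ 0) (hyw : A y w ≠ 0)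
    (hzw : z ≠ w) (hzw0 : A z w = 0)
    (hσ : A x z * A y z = A x w * A y w) : False := by
  have e1 := sq_one A lam hsym hdiag hrange hlam2 hlam1 hkey hxz
  have e2 := sq_one A lam hsym hdiag hrange hlam2 hlam1 hkey hyz
  have e3 := sq_one A lam hsym hdiag hrange hlam2 hlam1 hkey hxw
  have e4 := sq_one A lam hsym hdiag hrange hlam2 hlam1 hkey hyw
  have hxzne : x ≠ z := ne_of_edge A lam hsym hdiag hrange hlam2 hlam1 hkey hxz
  have hxwne : x ≠ w := ne_of_edge A lam hsym hdiag hrange hlam2 hlam1 hkey hxw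
  have hyzne : y ≠ z := ne_of_edge A lam hsym hdiag hrange hlam2 hlam1 hkey hyz
  have hywne : y ≠ w := ne_of_edge A lam hsym hdiag hrange hlam2 hlam1 hkey hyw
  set s := A x z * A y z with hs
  set coef : V → ℝ := fun v =>
    if v = x then 1 else if v = y then s else if v = z then -A x z else -A x w with hcoef
  have key := hkey {x, y, z, w} coef
  simp only [sum4 x y z w hxy hxzne hxwne hyzne hywne hzw] at key
  have cx : coef x = 1 := by simp [hcoef]
  have cy : coef y = s := by simp [hcoef, hxy.symm]
  have cz : coef z = -A x z := by simp [hcoef, hxzne.symm, hyzne.symm]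
  have cw : coef w = -A x w := by simp [hcoef, hxwne.symm, hywne.symm, hzw.symm]
  rw [cx, cy, cz, cw, hdiag x, hdiag y, hdiag z, hdiag w, h0, hzw0,
    hsym y x, hsym z x, hsym z y, hsym w x, hsym w y, hsym w z] at key
  rw [h0, hzw0] at key
  nlinarith [key, e1, e2, e3, e4, hσ, hlam2]

include hsym hdiag hrange hlam2 hlam1 hkey in
lemma cross {x y z w : V} (hxy : A x y ≠ 0) (hxz : A x z ≠ 0) (hzy : A z y = 0) (hzny : z ≠ y)
    (hyw : A y w ≠ 0) (hwx : A w x = 0) (hwnx : w ≠ x) (hzw : A z w ≠ 0) :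
    A x z * A x y * A y w * A z w = -1 := by
  have e0 := sq_one A lam hsym hdiag hrange hlam2 hlam1 hkey hxy
  have e1 := sq_one A lam hsym hdiag hrange hlam2 hlam1 hkey hxz
  have e2 := sq_one A lam hsym hdiag hrange hlam2 hlam1 hkey hyw
  have e3 := sq_one A lam hsym hdiag hrange hlam2 hlam1 hkey hzw
  by_contra hne
  have hprod : A x z * A x y * A y w * A z w = 1 := by
    have h2 : (A x z * A x y * A y w * A z w) * (A x z * A x y * A y w * A z w) = 1 := by
      have : (A x z * A x y * A y w * A z w) * (A x z * A x y * A y w * A z w)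
          = (A x z * A x z) * ((A x y * A x y) * ((A y w * A y w) * (A z w * A z w))) := by ring
      rw [this, e0, e1, e2, e3]; ring
    rcases mul_self_eq_one_iff.mp h2 with h | h
    · exact h
    · exact absurd h hne
  have hxyne : x ≠ y := ne_of_edge A lam hsym hdiag hrange hlam2 hlam1 hkey hxy
  have hxzne : x ≠ z := ne_of_edge A lam hsym hdiag hrange hlam2 hlam1 hkey hxz
  have hywne : y ≠ w := ne_of_edge A lam hsym hdiag hrange hlam2 hlam1 hkey hyw
  have hzwne : z ≠ w := ne_of_edge A lam hsym hdiag hrange hlam2 hlam1 hkey hzw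
  set coef : V → ℝ := fun v =>
    if v = x then 1 else if v = y then -A x y else if v = z then -A x z
    else A x y * A y w with hcoef
  have key := hkey {x, y, z, w} coef
  simp only [sum4 x y z w hxyne hxzne (Ne.symm hwnx) (Ne.symm hzny) hywne hzwne] at key
  have cx : coef x = 1 := by simp [hcoef]
  have cy : coef y = -A x y := by simp [hcoef, hxyne.symm]
  have cz : coef z = -A x z := by simp [hcoef, hxzne.symm, hzny]
  have cw : coef w = A x y * A y w := by simp [hcoef, hwnx, hywne.symm, hzwne.symm]
  have hAyz : A y z = 0 := by rw [hsym y z]; exact hzy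
  have hAxw : A x w = 0 := by rw [hsym x w]; exact hwx
  rw [cx, cy, cz, cw, hdiag x, hdiag y, hdiag z, hdiag w,
    hsym y x, hsym z x, hsym z y, hsym w x, hsym w y, hsym w z,
    hAyz, hAxw] at key
  nlinarith [key, e0, e1, e2, e3, hprod, hlam2]

include hsym hdiag hrange hlam2 hlam1 hkey in
lemma classclique {x y : V} (hxy : x ≠ y) (h0 : A x y = 0) (s : ℝ) (C : Finset V)
    (hC : ∀ z ∈ C, A x z ≠ 0 ∧ A y z ≠ 0 ∧ A x z * A y z = s) :
    (lam + 2) * ((C.card : ℝ) + 2) ≤ 2 := by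
  rcases C.eq_empty_or_nonempty with rfl | ⟨z₀, hz₀⟩
  · simp; nlinarith [hlam1]
  obtain ⟨hz₀x, hz₀y, hz₀s⟩ := hC z₀ hz₀
  have hss : s * s = 1 := by
    rw [← hz₀s]
    have e1 := sq_one A lam hsym hdiag hrange hlam2 hlam1 hkey hz₀x
    have e2 := sq_one A lam hsym hdiag hrange hlam2 hlam1 hkey hz₀y
    nlinarith [e1, e2]
  have hpair : ∀ z ∈ C, ∀ z' ∈ C, z ≠ z' → A x z * A x z' * A z z' = 1 := by
    intro z hz z' hz' hne
    obtain ⟨h1, h2, h3⟩ := hC z hz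
    obtain ⟨h1', h2', h3'⟩ := hC z' hz'
    by_cases hzz : A z z' = 0
    · exact (fourpt A lam hsym hdiag hrange hlam2 hlam1 hkey hxy h0 h1 h2 h1' h2' hne hzz (h3.trans h3'.symm)).elim
    · have hxz' : A z' x ≠ 0 := by rw [hsym z' x]; exact h1'
      have htr := triangle A lam hsym hdiag hrange hlam2 hlam1 hkey h1 hzz (by rw [hsym x z']; exact hxz')
      nlinarith [htr]
  have hxC : x ∉ C := fun h => (hC x h).1 (hdiag x)
  have hyC : y ∉ C := fun h => (hC y h).2.1 (hdiag y)
  set m : ℝ := (C.card : ℝ) with hm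
  have hm1 : (1:ℝ) ≤ m := by
    rw [hm]
    exact_mod_cast Finset.card_pos.mpr ⟨z₀, hz₀⟩
  set coef : V → ℝ := fun v =>
    if v = x then -m else if v = y then -m*s else if v ∈ C then 2 * A x v else 0 with hcoef
  have cx : coef x = -m := by simp [hcoef]
  have cy : coef y = -m*s := by simp [hcoef, hxy.symm]
  have cz : ∀ z ∈ C, coef z = 2 * A x z := by
    intro z hz
    have h1 : z ≠ x := (ne_of_edge A lam hsym hdiag hrange hlam2 hlam1 hkey (hC z hz).1).symm
    have h2 : z ≠ y := (ne_of_edge A lam hsym hdiag hrange hlam2 hlam1 hkey (hC z hz).2.1).symm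
    simp [hcoef, h1, h2, hz]
  have hxS : x ∉ insert y C := by simp [hxy, hxC]
  have key := hkey (insert x (insert y C)) coef
  simp only [Finset.sum_insert hxS, Finset.sum_insert hyC] at key
  rw [cx, cy] at key
  -- squares
  have b1 : ∑ z ∈ C, coef z^2 = 4*m := by
    rw [Finset.sum_congr rfl (fun z hz => by
      rw [cz z hz]
      have := sq_one A lam hsym hdiag hrange hlam2 hlam1 hkey (hC z hz).1
      nlinarith [this] : ∀ z ∈ C, coef z^2 = (4:ℝ))]
    rw [Finset.sum_const, nsmul_eq_mul, hm]; ring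
  have b2 : ∑ j ∈ C, -m * A x j * coef j = -2*m^2 := by
    rw [Finset.sum_congr rfl (fun z hz => by
      rw [cz z hz]
      have := sq_one A lam hsym hdiag hrange hlam2 hlam1 hkey (hC z hz).1
      nlinarith [this] : ∀ z ∈ C, -m * A x z * coef z = -2*m)]
    rw [Finset.sum_const, nsmul_eq_mul, hm]; ring
  have b3 : ∑ j ∈ C, -m*s * A y j * coef j = -2*m^2 := by
    rw [Finset.sum_congr rfl (fun z hz => by
      rw [cz z hz]
      obtain ⟨u1, u2, u3⟩ := hC z hz
      have : -m*s * A y z * (2 * A x z) = -2*m*s*(A x z * A y z) := by ring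
      rw [this, u3]
      nlinarith [hss] : ∀ z ∈ C, -m*s * A y z * coef z = -2*m)]
    rw [Finset.sum_const, nsmul_eq_mul, hm]; ring
  have b7 : ∑ z ∈ C, (coef z * A z x * -m + (coef z * A z y * (-m*s) + ∑ j ∈ C, coef z * A z j * coef j))
      = -2*m^2 + (-2*m^2 + (4*m^2 - 4*m)) := by
    rw [Finset.sum_add_distrib, Finset.sum_add_distrib]
    congr 1
    · rw [Finset.sum_congr rfl (fun z hz => by
        rw [cz z hz, hsym z x]
        have := sq_one A lam hsym hdiag hrange hlam2 hlam1 hkey (hC z hz).1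
        nlinarith [this] : ∀ z ∈ C, coef z * A z x * -m = -2*m)]
      rw [Finset.sum_const, nsmul_eq_mul, hm]; ring
    congr 1
    · rw [Finset.sum_congr rfl (fun z hz => by
        rw [cz z hz, hsym z y]
        obtain ⟨u1, u2, u3⟩ := hC z hz
        have : 2 * A x z * A y z * (-m*s) = -2*m*s*(A x z * A y z) := by ring
        rw [this, u3]
        nlinarith [hss] : ∀ z ∈ C, coef z * A z y * (-m*s) = -2*m)]
      rw [Finset.sum_const, nsmul_eq_mul, hm]; ring
    · have inner : ∀ z ∈ C, ∑ j ∈ C, coef z * A z j * coef j = 4*m - 4 := by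
        intro z hz
        have : ∀ j ∈ C, coef z * A z j * coef j = 4 - (if j = z then (4:ℝ) else 0) := by
          intro j hj
          by_cases hjz : j = z
          · subst hjz; rw [hdiag j]; simp
          · rw [cz z hz, cz j hj, if_neg hjz]
            have hp := hpair z hz j hj (Ne.symm hjz)
            have : 2 * A x z * A z j * (2 * A x j) = 4*(A x z * A x j * A z j) := by ring
            rw [this, hp]; ring
        rw [Finset.sum_congr rfl this, Finset.sum_sub_distrib, Finset.sum_const,
          Finset.sum_ite_eq' C z (fun _ => (4:ℝ)), if_pos hz, nsmul_eq_mul, hm]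
        ring
      rw [Finset.sum_congr rfl inner, Finset.sum_const, nsmul_eq_mul, hm]; ring
  rw [b1, b2, b3, b7, hdiag x, hdiag y, h0, hsym y x, h0] at key
  have e : (-m*s)^2 = m^2 := by
    have h : (-m*s)^2 = m^2*(s*s) := by ring
    rw [h, hss]; ring
  rw [e] at key
  have goal' : (lam + 2) * (m + 2) ≤ 2 := by nlinarith [key, hm1, hlam2]
  rw [hm] at goal'; exact goal'

include hsym hdiag hrange hlam2 hlam1 hkey in
lemma commonbound {x y : V} (hxy : x ≠ y) (h0 : A x y = 0) :
    ((univ.filter fun z => A x z ≠ 0 ∧ A y z ≠ 0).card : ℝ) ≤ 4/(lam+2) := by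
  have hε : (0:ℝ) < lam + 2 := by linarith
  set T := univ.filter fun z => A x z ≠ 0 ∧ A y z ≠ 0 with hT
  set T₁ := univ.filter fun z => A x z ≠ 0 ∧ A y z ≠ 0 ∧ A x z * A y z = 1 with hT₁
  set T₂ := univ.filter fun z => A x z ≠ 0 ∧ A y z ≠ 0 ∧ A x z * A y z = -1 with hT₂
  have hsub : T ⊆ T₁ ∪ T₂ := by
    intro z hz
    simp only [hT, Finset.mem_filter, Finset.mem_univ, true_and] at hz
    have h1 := sq_one A lam hsym hdiag hrange hlam2 hlam1 hkey hz.1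
    have h2 := sq_one A lam hsym hdiag hrange hlam2 hlam1 hkey hz.2
    have : A x z * A y z = 1 ∨ A x z * A y z = -1 := by
      apply mul_self_eq_one_iff.mp; nlinarith [h1, h2]
    simp only [Finset.mem_union, hT₁, hT₂, Finset.mem_filter, Finset.mem_univ, true_and]
    tauto
  have hc : (T.card : ℝ) ≤ T₁.card + T₂.card := by
    have := (Finset.card_le_card hsub).trans (Finset.card_union_le T₁ T₂)
    exact_mod_cast this
  have hb1 := classclique A lam hsym hdiag hrange hlam2 hlam1 hkey hxy h0 1 T₁ (fun z hz => by
    simpa [hT₁] using (Finset.mem_filter.mp hz).2)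
  have hb2 := classclique A lam hsym hdiag hrange hlam2 hlam1 hkey hxy h0 (-1) T₂ (fun z hz => by
    simpa [hT₂] using (Finset.mem_filter.mp hz).2)
  rw [le_div_iff₀ hε]
  nlinarith [hb1, hb2, hc, hε, mul_le_mul_of_nonneg_left hc (le_of_lt hε)]

include hsym hdiag hrange hlam2 hlam1 hkey in
lemma edgebound {x y : V} (hxy : A x y ≠ 0) (Z W : Finset V)
    (hZ : ∀ z ∈ Z, A x z ≠ 0 ∧ A y z = 0 ∧ z ≠ y)
    (hW : ∀ w ∈ W, A y w ≠ 0 ∧ A x w = 0 ∧ w ≠ x)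
    (hcard : W.card = Z.card) :
    (lam + 2) * (1 + (Z.card:ℝ)) ≤ 1 + 4/(lam+2) := by
  have hε : (0:ℝ) < lam + 2 := by linarith
  have hKb : (0:ℝ) < 4/(lam+2) := by positivity
  rcases Z.eq_empty_or_nonempty with rfl | hne
  · simp; nlinarith [hε, hKb, hlam1]
  set Kb := 4/(lam+2) with hKbdef
  have hxyne : x ≠ y := ne_of_edge A lam hsym hdiag hrange hlam2 hlam1 hkey hxy
  have hexy := sq_one A lam hsym hdiag hrange hlam2 hlam1 hkey hxy
  set m : ℝ := (Z.card : ℝ) with hm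
  have hm1 : (1:ℝ) ≤ m := by rw [hm]; exact_mod_cast Finset.card_pos.mpr hne
  have hmW : (W.card : ℝ) = m := by rw [hm]; exact_mod_cast hcard
  have hZW : Disjoint Z W := by
    rw [Finset.disjoint_left]
    intro a haZ haW
    exact (hW a haW).1 ((hZ a haZ).2.1)
  have hxZ : x ∉ Z := fun h => (hZ x h).1 (hdiag x)
  have hxW : x ∉ W := fun h => (hW x h).2.2 rfl
  have hyZ : y ∉ Z := fun h => (hZ y h).2.2 rfl
  have hyW : y ∉ W := fun h => (hW y h).1 (by rw [hsym y y]; exact hdiag y)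
  set coef : V → ℝ := fun v =>
    if v = x then -m else if v = y then m * A x y
    else if v ∈ Z then A x v else if v ∈ W then -(A x y * A y v) else 0 with hcoef
  have cx : coef x = -m := by simp [hcoef]
  have cy : coef y = m * A x y := by simp [hcoef, hxyne.symm]
  have czz : ∀ z ∈ Z, coef z = A x z := by
    intro z hz
    have h1 : z ≠ x := fun h => hxZ (h ▸ hz)
    simp [hcoef, h1, (hZ z hz).2.2, hz]
  have cww : ∀ w ∈ W, coef w = -(A x y * A y w) := by
    intro w hw
    have h1 : w ≠ y := fun h => hyW (h ▸ hw)
    have h2 : w ∉ Z := Finset.disjoint_right.mp hZW hw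
    simp [hcoef, (hW w hw).2.2, h1, h2, hw]
  have hxS : x ∉ insert y (Z ∪ W) := by simp [hxyne, hxZ, hxW]
  have hyS : y ∉ Z ∪ W := by simp [hyZ, hyW]
  have key := hkey (insert x (insert y (Z ∪ W))) coef
  simp only [Finset.sum_insert hxS, Finset.sum_insert hyS, Finset.sum_union hZW] at key
  rw [cx, cy] at key
  -- squares
  have s1 : ∑ z ∈ Z, coef z ^ 2 = m := by
    rw [Finset.sum_congr rfl (fun z hz => by
      rw [czz z hz]
      have := sq_one A lam hsym hdiag hrange hlam2 hlam1 hkey (hZ z hz).1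
      nlinarith [this] : ∀ z ∈ Z, coef z ^2 = (1:ℝ))]
    rw [Finset.sum_const, nsmul_eq_mul, hm]; ring
  have s2 : ∑ w ∈ W, coef w ^ 2 = m := by
    rw [Finset.sum_congr rfl (fun w hw => by
      rw [cww w hw]
      have h1 := sq_one A lam hsym hdiag hrange hlam2 hlam1 hkey (hW w hw).1
      nlinarith [h1, hexy] : ∀ w ∈ W, coef w ^2 = (1:ℝ))]
    rw [Finset.sum_const, nsmul_eq_mul, hmW]; ring
  -- row x (exact)
  have rx2 : ∑ j ∈ Z, -m * A x j * coef j = -m^2 := by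
    rw [Finset.sum_congr rfl (fun z hz => by
      rw [czz z hz]
      have := sq_one A lam hsym hdiag hrange hlam2 hlam1 hkey (hZ z hz).1
      nlinarith [this] : ∀ z ∈ Z, -m * A x z * coef z = -m)]
    rw [Finset.sum_const, nsmul_eq_mul, hm]; ring
  have rx3 : ∑ j ∈ W, -m * A x j * coef j = 0 := by
    rw [Finset.sum_congr rfl (fun w hw => by
      rw [(hW w hw).2.1]; ring : ∀ w ∈ W, -m * A x w * coef w = 0)]
    simp
  -- row y (exact)
  have ry2 : ∑ j ∈ Z, m * A x y * A y j * coef j = 0 := by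
    rw [Finset.sum_congr rfl (fun z hz => by
      rw [(hZ z hz).2.1]; ring : ∀ z ∈ Z, m * A x y * A y z * coef z = 0)]
    simp
  have ry3 : ∑ j ∈ W, m * A x y * A y j * coef j = -m^2 := by
    rw [Finset.sum_congr rfl (fun w hw => by
      rw [cww w hw]
      have h1 := sq_one A lam hsym hdiag hrange hlam2 hlam1 hkey (hW w hw).1
      have : m * A x y * A y w * -(A x y * A y w) = -m * ((A x y * A x y) * (A y w * A y w)) := by
        ring
      rw [this, hexy, h1]; ring : ∀ w ∈ W, m * A x y * A y w * coef w = -m)]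
    rw [Finset.sum_const, nsmul_eq_mul, hmW]; ring
  -- Z rows bound
  have rowZ : ∀ z ∈ Z, (coef z * A z x * -m + (coef z * A z y * (m * A x y) +
      (∑ j ∈ Z, coef z * A z j * coef j + ∑ j ∈ W, coef z * A z j * coef j)))
      ≤ -m + ((m-1) + Kb) := by
    intro z hz
    obtain ⟨hz1, hz2, hz3⟩ := hZ z hz
    have t1 : coef z * A z x * -m = -m := by
      rw [czz z hz, hsym z x]
      have := sq_one A lam hsym hdiag hrange hlam2 hlam1 hkey hz1
      nlinarith [this]
    have t2 : coef z * A z y * (m * A x y) = 0 := by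
      rw [hsym z y, hz2]; ring
    have t3 : ∑ j ∈ Z, coef z * A z j * coef j ≤ m - 1 := by
      have hb : ∀ j ∈ Z, coef z * A z j * coef j ≤ (if j = z then 0 else 1) := by
        intro j hj
        by_cases hjz : j = z
        · subst hjz; rw [hdiag j]; simp
        · rw [if_neg hjz, czz z hz, czz j hj]
          by_cases hzj : A z j = 0
          · rw [hzj]; norm_num
          · have htr := triangle A lam hsym hdiag hrange hlam2 hlam1 hkey hz1 hzj (hZ j hj).1
            nlinarith [htr]
      calc ∑ j ∈ Z, coef z * A z j * coef j ≤ ∑ j ∈ Z, (if j = z then (0:ℝ) else 1) :=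
            Finset.sum_le_sum hb
        _ = m - 1 := by
            rw [Finset.sum_congr rfl (fun j _ => by
              rw [show (if j = z then (0:ℝ) else 1) = 1 - (if j = z then 1 else 0) by
                by_cases h : j = z <;> simp [h]] : ∀ j ∈ Z, _ = _)]
            rw [Finset.sum_sub_distrib, Finset.sum_const, Finset.sum_ite_eq' Z z (fun _ => (1:ℝ)),
              if_pos hz, nsmul_eq_mul, hm]; ring
    have t4 : ∑ j ∈ W, coef z * A z j * coef j ≤ Kb := by
      have hb : ∀ j ∈ W, coef z * A z j * coef j ≤ (if A z j ≠ 0 then (1:ℝ) else 0) := by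
        intro w hw
        obtain ⟨hw1, hw2, hw3⟩ := hW w hw
        rw [czz z hz, cww w hw]
        by_cases h : A z w = 0
        · rw [h]; simp
        · rw [if_pos h]
          have hχ := cross A lam hsym hdiag hrange hlam2 hlam1 hkey hxy hz1 (by rw [hsym z y]; exact hz2) hz3 hw1
            (by rw [hsym w x]; exact hw2) hw3 h
          have : A x z * A z w * -(A x y * A y w) = -(A x z * A x y * A y w * A z w) := by ring
          rw [this, hχ]; norm_num
      calc ∑ j ∈ W, coef z * A z j * coef j ≤ ∑ j ∈ W, (if A z j ≠ 0 then (1:ℝ) else 0) :=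
            Finset.sum_le_sum hb
        _ = ((W.filter fun w => A z w ≠ 0).card : ℝ) := by
            rw [Finset.sum_ite, Finset.sum_const, Finset.sum_const]; simp
        _ ≤ ((univ.filter fun w => A z w ≠ 0 ∧ A y w ≠ 0).card : ℝ) := by
            have hsub : (W.filter fun w => A z w ≠ 0) ⊆ (univ.filter fun w => A z w ≠ 0 ∧ A y w ≠ 0) := by
              intro w hw
              rw [Finset.mem_filter] at hw ⊢
              exact ⟨Finset.mem_univ w, hw.2, (hW w hw.1).1⟩
            exact_mod_cast Finset.card_le_card hsub
        _ ≤ Kb := commonbound A lam hsym hdiag hrange hlam2 hlam1 hkey hz3 (by rw [hsym z y]; exact hz2)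
    linarith [t3, t4, t1.le, t2.le, t1.ge, t2.ge]
  -- W rows bound
  have rowW : ∀ w ∈ W, (coef w * A w x * -m + (coef w * A w y * (m * A x y) +
      (∑ j ∈ Z, coef w * A w j * coef j + ∑ j ∈ W, coef w * A w j * coef j)))
      ≤ 0 + (-m + (Kb + (m-1))) := by
    intro w hw
    obtain ⟨hw1, hw2, hw3⟩ := hW w hw
    have t1 : coef w * A w x * -m = 0 := by rw [hsym w x, hw2]; ring
    have t2 : coef w * A w y * (m * A x y) = -m := by
      rw [cww w hw, hsym w y]
      have h1 := sq_one A lam hsym hdiag hrange hlam2 hlam1 hkey hw1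
      nlinarith [h1, hexy]
    have t3 : ∑ j ∈ Z, coef w * A w j * coef j ≤ Kb := by
      have hb : ∀ j ∈ Z, coef w * A w j * coef j ≤ (if A w j ≠ 0 then (1:ℝ) else 0) := by
        intro z hz
        obtain ⟨hz1, hz2, hz3⟩ := hZ z hz
        rw [czz z hz, cww w hw]
        by_cases h : A w z = 0
        · rw [h]; simp
        · rw [if_pos h]
          have hzw : A z w ≠ 0 := by rw [hsym z w]; exact h
          have hχ := cross A lam hsym hdiag hrange hlam2 hlam1 hkey hxy hz1 (by rw [hsym z y]; exact hz2) hz3 hw1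
            (by rw [hsym w x]; exact hw2) hw3 hzw
          have : -(A x y * A y w) * A w z * A x z = -(A x z * A x y * A y w * A z w) := by
            rw [hsym w z]; ring
          rw [this, hχ]; norm_num
      calc ∑ j ∈ Z, coef w * A w j * coef j ≤ ∑ j ∈ Z, (if A w j ≠ 0 then (1:ℝ) else 0) :=
            Finset.sum_le_sum hb
        _ = ((Z.filter fun z => A w z ≠ 0).card : ℝ) := by
            rw [Finset.sum_ite, Finset.sum_const, Finset.sum_const]; simp
        _ ≤ ((univ.filter fun z => A w z ≠ 0 ∧ A x z ≠ 0).card : ℝ) := by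
            have hsub : (Z.filter fun z => A w z ≠ 0) ⊆ (univ.filter fun z => A w z ≠ 0 ∧ A x z ≠ 0) := by
              intro z hz
              rw [Finset.mem_filter] at hz ⊢
              exact ⟨Finset.mem_univ z, hz.2, (hZ z hz.1).1⟩
            exact_mod_cast Finset.card_le_card hsub
        _ ≤ Kb := commonbound A lam hsym hdiag hrange hlam2 hlam1 hkey hw3 (by rw [hsym w x]; exact hw2)
    have t4 : ∑ j ∈ W, coef w * A w j * coef j ≤ m - 1 := by
      have hb : ∀ j ∈ W, coef w * A w j * coef j ≤ (if j = w then 0 else 1) := by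
        intro j hj
        by_cases hjw : j = w
        · subst hjw; rw [hdiag j]; simp
        · rw [if_neg hjw, cww w hw, cww j hj]
          by_cases hwj : A w j = 0
          · rw [hwj]; norm_num
          · have htr := triangle A lam hsym hdiag hrange hlam2 hlam1 hkey hw1 hwj (hW j hj).1
            have h1 := sq_one A lam hsym hdiag hrange hlam2 hlam1 hkey hxy
            have : -(A x y * A y w) * A w j * -(A x y * A y j) =
                (A x y * A x y) * (A y w * A w j * A y j) := by ring
            rw [this, h1, htr]; norm_num
      calc ∑ j ∈ W, coef w * A w j * coef j ≤ ∑ j ∈ W, (if j = w then (0:ℝ) else 1) :=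
            Finset.sum_le_sum hb
        _ = m - 1 := by
            rw [Finset.sum_congr rfl (fun j _ => by
              rw [show (if j = w then (0:ℝ) else 1) = 1 - (if j = w then 1 else 0) by
                by_cases h : j = w <;> simp [h]] : ∀ j ∈ W, _ = _)]
            rw [Finset.sum_sub_distrib, Finset.sum_const, Finset.sum_ite_eq' W w (fun _ => (1:ℝ)),
              if_pos hw, nsmul_eq_mul, hmW]; ring
    linarith [t3, t4, t1.le, t2.le]
  have sumZ : ∑ z ∈ Z, (coef z * A z x * -m + (coef z * A z y * (m * A x y) +
      (∑ j ∈ Z, coef z * A z j * coef j + ∑ j ∈ W, coef z * A z j * coef j)))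
      ≤ m * (-m + ((m-1) + Kb)) := by
    calc _ ≤ ∑ _z ∈ Z, (-m + ((m-1) + Kb)) := Finset.sum_le_sum rowZ
      _ = m * (-m + ((m-1) + Kb)) := by rw [Finset.sum_const, nsmul_eq_mul, hm]
  have sumW : ∑ w ∈ W, (coef w * A w x * -m + (coef w * A w y * (m * A x y) +
      (∑ j ∈ Z, coef w * A w j * coef j + ∑ j ∈ W, coef w * A w j * coef j)))
      ≤ m * (0 + (-m + (Kb + (m-1)))) := by
    calc _ ≤ ∑ _w ∈ W, (0 + (-m + (Kb + (m-1)))) := Finset.sum_le_sum rowW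
      _ = m * (0 + (-m + (Kb + (m-1)))) := by rw [Finset.sum_const, nsmul_eq_mul, hmW]
  rw [s1, s2, rx2, rx3, ry2, ry3, hdiag x, hdiag y, hsym y x] at key
  have hsq : (m * A x y)^2 = m^2 := by nlinarith [hexy]
  have hAxy2 : -m * A x y * (m * A x y) = -m^2 := by nlinarith [hexy]
  have hAxy3 : m * A x y * A x y * -m = -m^2 := by nlinarith [hexy]
  rw [hsq, hAxy2, hAxy3] at key
  have goal' : (lam + 2) * (1 + m) ≤ 1 + Kb := by
    nlinarith [key, sumZ, sumW, hm1, hε, hKb]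
  rw [hm] at goal'; rw [hKbdef] at goal'; exact goal'

include hsym hdiag hrange hlam2 hlam1 hkey in
lemma p7bound {u x : V} (hux : A u x ≠ 0) (Z W : Finset V)
    (hZ : ∀ z ∈ Z, A u z ≠ 0 ∧ A x z = 0 ∧ z ≠ x)
    (hW : ∀ w ∈ W, A u w ≠ 0 ∧ A x w ≠ 0)
    (hcard : W.card = Z.card) :
    (lam + 2) * (2 + (Z.card:ℝ)) ≤ 2 + 8/(lam+2) := by
  have hε : (0:ℝ) < lam + 2 := by linarith
  have hKb : (0:ℝ) < 4/(lam+2) := by positivity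
  rcases Z.eq_empty_or_nonempty with rfl | hne
  · have hKb8 : (0:ℝ) < 8/(lam+2) := by positivity
    simp; nlinarith [hε, hKb8, hlam1]
  set Kb := 4/(lam+2) with hKbdef
  set m : ℝ := (Z.card : ℝ) with hm
  have hm1 : (1:ℝ) ≤ m := by rw [hm]; exact_mod_cast Finset.card_pos.mpr hne
  have hmW : (W.card : ℝ) = m := by rw [hm]; exact_mod_cast hcard
  have hZW : Disjoint Z W := by
    rw [Finset.disjoint_left]
    intro a haZ haW
    exact (hW a haW).2 ((hZ a haZ).2.1)
  have huZ : u ∉ Z := fun h => (hZ u h).1 (hdiag u)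
  have huW : u ∉ W := fun h => (hW u h).1 (hdiag u)
  set coef : V → ℝ := fun v =>
    if v = u then -m else if v ∈ Z ∪ W then A u v else 0 with hcoef
  have cu : coef u = -m := by simp [hcoef]
  have cm : ∀ z ∈ Z ∪ W, coef z = A u z := by
    intro z hz
    have hzne : z ≠ u := by
      rintro rfl; rcases Finset.mem_union.mp hz with h | h
      exacts [huZ h, huW h]
    simp only [hcoef]
    rw [if_neg hzne, if_pos hz]
  have czz : ∀ z ∈ Z, coef z = A u z := fun z hz => cm z (Finset.mem_union_left _ hz)
  have cww : ∀ w ∈ W, coef w = A u w := fun w hw => cm w (Finset.mem_union_right _ hw)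
  have huS : u ∉ Z ∪ W := by simp [huZ, huW]
  have key := hkey (insert u (Z ∪ W)) coef
  simp only [Finset.sum_insert huS, Finset.sum_union hZW] at key
  rw [cu] at key
  -- squares
  have s1 : ∑ z ∈ Z, coef z ^ 2 = m := by
    rw [Finset.sum_congr rfl (fun z hz => by
      rw [czz z hz]
      have := sq_one A lam hsym hdiag hrange hlam2 hlam1 hkey (hZ z hz).1
      nlinarith [this] : ∀ z ∈ Z, coef z ^2 = (1:ℝ))]
    rw [Finset.sum_const, nsmul_eq_mul, hm]; ring
  have s2 : ∑ w ∈ W, coef w ^ 2 = m := by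
    rw [Finset.sum_congr rfl (fun w hw => by
      rw [cww w hw]
      have := sq_one A lam hsym hdiag hrange hlam2 hlam1 hkey (hW w hw).1
      nlinarith [this] : ∀ w ∈ W, coef w ^2 = (1:ℝ))]
    rw [Finset.sum_const, nsmul_eq_mul, hmW]; ring
  -- row u (exact)
  have ru1 : ∑ j ∈ Z, -m * A u j * coef j = -m^2 := by
    rw [Finset.sum_congr rfl (fun z hz => by
      rw [czz z hz]
      have := sq_one A lam hsym hdiag hrange hlam2 hlam1 hkey (hZ z hz).1
      nlinarith [this] : ∀ z ∈ Z, -m * A u z * coef z = -m)]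
    rw [Finset.sum_const, nsmul_eq_mul, hm]; ring
  have ru2 : ∑ j ∈ W, -m * A u j * coef j = -m^2 := by
    rw [Finset.sum_congr rfl (fun w hw => by
      rw [cww w hw]
      have := sq_one A lam hsym hdiag hrange hlam2 hlam1 hkey (hW w hw).1
      nlinarith [this] : ∀ w ∈ W, -m * A u w * coef w = -m)]
    rw [Finset.sum_const, nsmul_eq_mul, hmW]; ring
  -- generic pair bound on Z ∪ W
  have pairb : ∀ i ∈ Z ∪ W, ∀ j ∈ Z ∪ W, i ≠ j → coef i * A i j * coef j ≤ 1 := by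
    intro i hi j hj hij
    rw [cm i hi, cm j hj]
    by_cases hA : A i j = 0
    · rw [hA]; norm_num
    · have hiu : A u i ≠ 0 := by
        rcases Finset.mem_union.mp hi with h | h
        exacts [(hZ i h).1, (hW i h).1]
      have hju : A u j ≠ 0 := by
        rcases Finset.mem_union.mp hj with h | h
        exacts [(hZ j h).1, (hW j h).1]
      have htr := triangle A lam hsym hdiag hrange hlam2 hlam1 hkey hiu hA hju
      nlinarith [htr]
  -- helper: within-set row sums
  have withinb : ∀ (T : Finset V), T ⊆ Z ∪ W → ((T.card : ℝ) = m) →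
      ∀ i ∈ Z ∪ W, (∀ j ∈ T, coef i * A i j * coef j ≤ (if j = i then 0 else 1)) := by
    intro T hT hTm i hi j hj
    by_cases hji : j = i
    · subst hji; rw [hdiag j]; simp
    · rw [if_neg hji]
      exact pairb i hi j (hT hj) (Ne.symm hji)
  have sumbound : ∀ (T : Finset V), ((T.card : ℝ) = m) → T ⊆ Z ∪ W →
      ∀ i ∈ Z ∪ W, (∑ j ∈ T, coef i * A i j * coef j ≤ m - (if i ∈ T then 1 else 0)) := by
    intro T hTm hT i hi
    calc ∑ j ∈ T, coef i * A i j * coef j ≤ ∑ j ∈ T, (if j = i then (0:ℝ) else 1) :=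
          Finset.sum_le_sum (withinb T hT hTm i hi)
      _ = m - (if i ∈ T then 1 else 0) := by
          rw [Finset.sum_congr rfl (fun j _ => by
            rw [show (if j = i then (0:ℝ) else 1) = 1 - (if j = i then 1 else 0) by
              by_cases h : j = i <;> simp [h]] : ∀ j ∈ T, _ = _)]
          rw [Finset.sum_sub_distrib, Finset.sum_const, Finset.sum_ite_eq' T i (fun _ => (1:ℝ)),
            nsmul_eq_mul, hTm, mul_one]
  -- cross bound per z ∈ Z
  have crossb : ∀ z ∈ Z, ∑ w ∈ W, coef z * A z w * coef w ≤ Kb := by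
    intro z hz
    obtain ⟨hz1, hz2, hz3⟩ := hZ z hz
    have hb : ∀ w ∈ W, coef z * A z w * coef w ≤ (if A z w ≠ 0 then (1:ℝ) else 0) := by
      intro w hw
      by_cases h : A z w = 0
      · rw [h]; simp
      · rw [if_pos h]
        exact pairb z (Finset.mem_union_left _ hz) w (Finset.mem_union_right _ hw)
          (ne_of_edge A lam hsym hdiag hrange hlam2 hlam1 hkey h)
    calc ∑ w ∈ W, coef z * A z w * coef w ≤ ∑ w ∈ W, (if A z w ≠ 0 then (1:ℝ) else 0) :=
          Finset.sum_le_sum hb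
      _ = ((W.filter fun w => A z w ≠ 0).card : ℝ) := by
          rw [Finset.sum_ite, Finset.sum_const, Finset.sum_const]; simp
      _ ≤ ((univ.filter fun w => A z w ≠ 0 ∧ A x w ≠ 0).card : ℝ) := by
          have hsub : (W.filter fun w => A z w ≠ 0) ⊆ (univ.filter fun w => A z w ≠ 0 ∧ A x w ≠ 0) := by
            intro w hw
            rw [Finset.mem_filter] at hw ⊢
            exact ⟨Finset.mem_univ w, hw.2, (hW w hw.1).2⟩
          exact_mod_cast Finset.card_le_card hsub
      _ ≤ Kb := commonbound A lam hsym hdiag hrange hlam2 hlam1 hkey hz3 (by rw [hsym z x]; exact hz2)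
  -- assemble row sums
  have sumZrows : ∑ z ∈ Z, (coef z * A z u * -m + (∑ j ∈ Z, coef z * A z j * coef j
      + ∑ j ∈ W, coef z * A z j * coef j)) ≤ -m^2 + (m*(m-1) + m*Kb) := by
    rw [Finset.sum_add_distrib, Finset.sum_add_distrib]
    have e1 : ∑ z ∈ Z, coef z * A z u * -m = -m^2 := by
      rw [Finset.sum_congr rfl (fun z hz => by
        rw [czz z hz, hsym z u]
        have := sq_one A lam hsym hdiag hrange hlam2 hlam1 hkey (hZ z hz).1
        nlinarith [this] : ∀ z ∈ Z, coef z * A z u * -m = -m)]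
      rw [Finset.sum_const, nsmul_eq_mul, hm]; ring
    have e2 : ∑ z ∈ Z, ∑ j ∈ Z, coef z * A z j * coef j ≤ m*(m-1) := by
      calc _ ≤ ∑ z ∈ Z, (m - (if z ∈ Z then (1:ℝ) else 0)) :=
            Finset.sum_le_sum (fun z hz => sumbound Z hm.symm Finset.subset_union_left z
              (Finset.mem_union_left _ hz))
        _ = m*(m-1) := by
            have hconst : ∀ z ∈ Z, m - (if z ∈ Z then (1:ℝ) else 0) = m - 1 :=
              fun z hz => by rw [if_pos hz]
            rw [Finset.sum_congr rfl hconst, Finset.sum_const, nsmul_eq_mul, hm]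
    have e3 : ∑ z ∈ Z, ∑ j ∈ W, coef z * A z j * coef j ≤ m*Kb := by
      calc _ ≤ ∑ z ∈ Z, Kb := Finset.sum_le_sum crossb
        _ = m*Kb := by rw [Finset.sum_const, nsmul_eq_mul, hm]
    linarith [e1.le, e2, e3]
  have sumWrows : ∑ w ∈ W, (coef w * A w u * -m + (∑ j ∈ Z, coef w * A w j * coef j
      + ∑ j ∈ W, coef w * A w j * coef j)) ≤ -m^2 + (m*Kb + m*(m-1)) := by
    rw [Finset.sum_add_distrib, Finset.sum_add_distrib]
    have e1 : ∑ w ∈ W, coef w * A w u * -m = -m^2 := by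
      rw [Finset.sum_congr rfl (fun w hw => by
        rw [cww w hw, hsym w u]
        have := sq_one A lam hsym hdiag hrange hlam2 hlam1 hkey (hW w hw).1
        nlinarith [this] : ∀ w ∈ W, coef w * A w u * -m = -m)]
      rw [Finset.sum_const, nsmul_eq_mul, hmW]; ring
    have e2 : ∑ w ∈ W, ∑ j ∈ Z, coef w * A w j * coef j ≤ m*Kb := by
      rw [Finset.sum_comm]
      have : ∀ z ∈ Z, ∑ w ∈ W, coef w * A w z * coef z ≤ Kb := by
        intro z hz
        have : ∀ w ∈ W, coef w * A w z * coef z = coef z * A z w * coef w := by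
          intro w hw; rw [hsym w z]; ring
        rw [Finset.sum_congr rfl this]
        exact crossb z hz
      calc _ ≤ ∑ z ∈ Z, Kb := Finset.sum_le_sum this
        _ = m*Kb := by rw [Finset.sum_const, nsmul_eq_mul, hm]
    have e3 : ∑ w ∈ W, ∑ j ∈ W, coef w * A w j * coef j ≤ m*(m-1) := by
      calc _ ≤ ∑ w ∈ W, (m - (if w ∈ W then (1:ℝ) else 0)) :=
            Finset.sum_le_sum (fun w hw => sumbound W hmW Finset.subset_union_right w
              (Finset.mem_union_right _ hw))
        _ = m*(m-1) := by
            have hconst : ∀ w ∈ W, m - (if w ∈ W then (1:ℝ) else 0) = m - 1 :=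
              fun w hw => by rw [if_pos hw]
            rw [Finset.sum_congr rfl hconst, Finset.sum_const, nsmul_eq_mul, hmW]
    linarith [e1.le, e2, e3]
  rw [s1, s2, ru1, ru2, hdiag u] at key
  have goal' : (lam + 2) * (2 + m) ≤ 2 + 2*Kb := by
    nlinarith [key, sumZrows, sumWrows, hm1, hε, hKb]
  rw [hm, hKbdef] at goal'
  calc (lam + 2) * (2 + (Z.card:ℝ)) ≤ 2 + 2*(4/(lam+2)) := goal'
    _ = 2 + 8/(lam+2) := by ring

include hsym hdiag hrange hlam2 hlam1 hkey in
lemma nodist2 (D mB : ℕ)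
    (hdeg : ∀ v : V, D ≤ (univ.filter fun w => A v w ≠ 0).card)
    (hc1 : (lam+2) * (2 + (mB:ℝ)) > 2 + 8/(lam+2))
    (hc2 : (lam+2) * (1 + (mB:ℝ)) > 1 + 4/(lam+2))
    (hc3 : (D:ℝ) ≥ 2*(mB:ℝ) + 3 + 4/(lam+2))
    {u x y : V} (hux : A u x ≠ 0) (huy : A u y ≠ 0) (hxy : x ≠ y) (hxy0 : A x y = 0) :
    False := by
  classical
  set N : V → Finset V := fun v => univ.filter fun w => A v w ≠ 0 with hN
  set P : V → Finset V := fun x' => univ.filter fun z => A u z ≠ 0 ∧ A x' z ≠ 0 with hP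
  set Q : V → Finset V := fun x' => univ.filter fun z => A u z ≠ 0 ∧ A x' z = 0 ∧ z ≠ x' with hQ
  -- step 1 : for a neighbor x' of u, not both P x' and Q x' are large
  have step1 : ∀ x' : V, A u x' ≠ 0 → (P x').card < mB ∨ (Q x').card < mB := by
    intro x' hux'
    by_contra hcon
    push_neg at hcon
    obtain ⟨h1, h2⟩ := hcon
    obtain ⟨Z, hZsub, hZcard⟩ := Finset.exists_subset_card_eq h2
    obtain ⟨W, hWsub, hWcard⟩ := Finset.exists_subset_card_eq h1
    have hb := p7bound A lam hsym hdiag hrange hlam2 hlam1 hkey hux' Z W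
      (fun z hz => by
        have := hZsub hz; rw [hQ, Finset.mem_filter] at this; exact this.2)
      (fun w hw => by
        have := hWsub hw; rw [hP, Finset.mem_filter] at this; exact this.2)
      (hWcard.trans hZcard.symm)
    rw [hZcard] at hb
    linarith [hb, hc1]
  -- step 2 : cardinality partition
  have step2 : ∀ x' : V, A u x' ≠ 0 → (N u).card = (P x').card + (Q x').card + 1 := by
    intro x' hux'
    have hdisj : Disjoint (P x') (Q x') := by
      rw [Finset.disjoint_left]
      intro a ha hb
      rw [hP, Finset.mem_filter] at ha
      rw [hQ, Finset.mem_filter] at hb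
      exact ha.2.2 hb.2.2.1
    have hx'P : x' ∉ P x' ∪ Q x' := by
      rw [Finset.mem_union, hP, hQ, Finset.mem_filter, Finset.mem_filter]
      rintro (⟨-, -, h⟩ | ⟨-, -, -, h⟩)
      · exact h (hdiag x')
      · exact h rfl
    have hunion : N u = (P x' ∪ Q x') ∪ {x'} := by
      ext z
      rw [hN]
      simp only [Finset.mem_filter, Finset.mem_union, Finset.mem_singleton, hP, hQ,
        Finset.mem_univ, true_and]
      constructor
      · intro hz
        by_cases hzx : z = x'
        · tauto
        · by_cases hA : A x' z = 0
          · exact Or.inl (Or.inr ⟨hz, hA, hzx⟩)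
          · exact Or.inl (Or.inl ⟨hz, hA⟩)
      · rintro ((⟨h, -⟩ | ⟨h, -⟩) | rfl)
        · exact h
        · exact h
        · exact hux'
    rw [hunion, Finset.card_union_of_disjoint (by
        rw [Finset.disjoint_singleton_right]; exact hx'P),
      Finset.card_union_of_disjoint hdisj, Finset.card_singleton]
  have hε0 : (0:ℝ) < lam+2 := by linarith
  have hKb : (0:ℝ) < 4/(lam+2) := by positivity
  have hNu : D ≤ (N u).card := hdeg u
  -- edge-case contradiction builder
  have caseB : ∀ x' : V, A u x' ≠ 0 → (P x').card < mB → False := by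
    intro x' hux' hPsmall
    -- N x' decomposition along u
    have hx'u : A x' u ≠ 0 := by rw [hsym x' u]; exact hux'
    have step2' := step2 x' hux'
    -- card (Q x') ≥ D - mB - 1
    have hQbig : mB ≤ (Q x').card := by
      have : (D:ℝ) ≤ (P x').card + (Q x').card + 1 := by
        exact_mod_cast step2' ▸ hNu
      have hmB : ((P x').card : ℝ) < mB := by exact_mod_cast hPsmall
      have : (mB:ℝ) ≤ (Q x').card := by linarith [hc3, hKb, Nat.cast_nonneg (α := ℝ) mB]
      exact_mod_cast this
    -- D x'u : neighbors of x' not adjacent to u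
    set Dxu := univ.filter (fun z => A x' z ≠ 0 ∧ A u z = 0 ∧ z ≠ u) with hDxu
    have hdisj2 : Disjoint (univ.filter fun z => A x' z ≠ 0 ∧ A u z ≠ 0) Dxu := by
      rw [Finset.disjoint_left]
      intro a ha hb
      rw [Finset.mem_filter] at ha
      rw [hDxu, Finset.mem_filter] at hb
      exact ha.2.2 hb.2.2.1
    have huP : u ∉ (univ.filter fun z => A x' z ≠ 0 ∧ A u z ≠ 0) ∪ Dxu := by
      rw [Finset.mem_union, Finset.mem_filter, hDxu, Finset.mem_filter]
      rintro (⟨-, -, h⟩ | ⟨-, -, -, h⟩)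
      · exact h (hdiag u)
      · exact h rfl
    have hunion2 : N x' = ((univ.filter fun z => A x' z ≠ 0 ∧ A u z ≠ 0) ∪ Dxu) ∪ {u} := by
      ext z
      rw [hN]
      simp only [Finset.mem_filter, Finset.mem_union, Finset.mem_singleton, hDxu,
        Finset.mem_univ, true_and]
      constructor
      · intro hz
        by_cases hzu : z = u
        · tauto
        · by_cases hA : A u z = 0
          · exact Or.inl (Or.inr ⟨hz, hA, hzu⟩)
          · exact Or.inl (Or.inl ⟨hz, hA⟩)
      · rintro ((⟨h, -⟩ | ⟨h, -⟩) | rfl)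
        · exact h
        · exact h
        · exact hx'u
    have hcardeq : (N x').card = (univ.filter fun z => A x' z ≠ 0 ∧ A u z ≠ 0).card
        + Dxu.card + 1 := by
      rw [hunion2, Finset.card_union_of_disjoint (by
          rw [Finset.disjoint_singleton_right]; exact huP),
        Finset.card_union_of_disjoint hdisj2, Finset.card_singleton]
    have hsame : (univ.filter fun z => A x' z ≠ 0 ∧ A u z ≠ 0).card = (P x').card := by
      congr 1
      ext z
      rw [hP]
      simp only [Finset.mem_filter, Finset.mem_univ, true_and]
      tauto
    have hDxubig : mB ≤ Dxu.card := by
      have h1 : (D:ℝ) ≤ (N x').card := by exact_mod_cast hdeg x'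
      have h2 : ((N x').card:ℝ) = ((P x').card : ℝ) + Dxu.card + 1 := by
        rw [hcardeq, hsame]; push_cast; ring
      have hmB : ((P x').card : ℝ) < mB := by exact_mod_cast hPsmall
      have : (mB:ℝ) ≤ Dxu.card := by linarith [hc3, hKb]
      exact_mod_cast this
    obtain ⟨Z, hZsub, hZcard⟩ := Finset.exists_subset_card_eq hDxubig
    obtain ⟨W, hWsub, hWcard⟩ := Finset.exists_subset_card_eq hQbig
    have hb := edgebound A lam hsym hdiag hrange hlam2 hlam1 hkey hx'u Z W
      (fun z hz => by
        have := hZsub hz; rw [hDxu, Finset.mem_filter] at this; exact this.2)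
      (fun w hw => by
        have := hWsub hw; rw [hQ, Finset.mem_filter] at this; exact this.2)
      (hWcard.trans hZcard.symm)
    rw [hZcard] at hb
    linarith [hb, hc2]
  -- main case analysis
  rcases step1 x hux with hPx | hQx
  · exact caseB x hux hPx
  rcases step1 y huy with hPy | hQy
  · exact caseB y huy hPy
  -- case A : both Q x and Q y small
  have hcommon := commonbound A lam hsym hdiag hrange hlam2 hlam1 hkey hxy hxy0
  set common := univ.filter fun z => A x z ≠ 0 ∧ A y z ≠ 0 with hcommon'
  set T := (Q x ∪ {x}) ∪ (Q y ∪ {y}) with hT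
  have hsub : N u \ T ⊆ common := by
    intro z hz
    rw [Finset.mem_sdiff, hN, Finset.mem_filter] at hz
    obtain ⟨⟨-, hz1⟩, hz2⟩ := hz
    rw [hT, Finset.mem_union, Finset.mem_union, Finset.mem_union] at hz2
    push_neg at hz2
    obtain ⟨⟨hzQx, hzx⟩, hzQy, hzy⟩ := hz2
    rw [Finset.mem_singleton] at hzx hzy
    rw [hQ, Finset.mem_filter] at hzQx hzQy
    rw [hcommon', Finset.mem_filter]
    refine ⟨Finset.mem_univ z, ?_, ?_⟩
    · by_contra hA
      exact hzQx ⟨Finset.mem_univ z, hz1, hA, hzx⟩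
    · by_contra hA
      exact hzQy ⟨Finset.mem_univ z, hz1, hA, hzy⟩
  have hTcard : T.card ≤ (Q x).card + (Q y).card + 2 := by
    calc T.card ≤ (Q x ∪ {x}).card + (Q y ∪ {y}).card := Finset.card_union_le _ _
      _ ≤ ((Q x).card + 1) + ((Q y).card + 1) := by
          gcongr <;> exact (Finset.card_union_le _ _).trans (by simp)
      _ = (Q x).card + (Q y).card + 2 := by ring
  have hfinal : (D:ℝ) ≤ common.card + (2*(mB:ℝ) + 2) := by
    have h1 : (N u).card ≤ (N u \ T).card + T.card := Finset.card_le_card_sdiff_add_card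
    have h2 : (N u \ T).card ≤ common.card := Finset.card_le_card hsub
    have hQxr : ((Q x).card : ℝ) < mB := by exact_mod_cast hQx
    have hQyr : ((Q y).card : ℝ) < mB := by exact_mod_cast hQy
    have h1r : ((N u).card : ℝ) ≤ ((N u \ T).card : ℝ) + T.card := by exact_mod_cast h1
    have h2r : ((N u \ T).card : ℝ) ≤ common.card := by exact_mod_cast h2
    have h3r : (T.card : ℝ) ≤ (Q x).card + (Q y).card + 2 := by exact_mod_cast hTcard
    have h4r : (D:ℝ) ≤ (N u).card := by exact_mod_cast hNu
    linarith
  linarith [hfinal, hcommon, hc3, hKb]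

end Comb

/-! ### Completeness from connectivity -/

lemma complete_of_connected (A : Matrix V V ℝ)
    (hsym : ∀ u v, A u v = A v u) (hdiag : ∀ i, A i i = 0)
    (hconn : (SimpleGraph.fromRel fun u v => A u v ≠ 0).Connected)
    (hnd : ∀ u x y : V, A u x ≠ 0 → A u y ≠ 0 → x ≠ y → A x y ≠ 0) :
    ∀ x y : V, x ≠ y → A x y ≠ 0 := by
  set G := SimpleGraph.fromRel fun u v : V => A u v ≠ 0 with hG
  have hadj : ∀ u v : V, G.Adj u v → A u v ≠ 0 := by
    intro u v huv
    rw [hG, SimpleGraph.fromRel_adj] at huv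
    rcases huv.2 with h | h
    · exact h
    · rw [hsym u v]; exact h
  have claim : ∀ (x y : V) (_ : G.Walk x y), x = y ∨ A x y ≠ 0 := by
    intro x y w
    induction w with
    | nil => exact Or.inl rfl
    | cons hab p ih =>
      rename_i a b c'
      have hA : A a b ≠ 0 := hadj a b hab
      rcases ih with rfl | hbc
      · exact Or.inr hA
      · by_cases hac : a = c'
        · exact Or.inl hac
        · refine Or.inr (hnd b a c' ?_ hbc hac)
          rw [hsym b a]; exact hA
  intro x y hne
  obtain ⟨w⟩ := hconn.preconnected x y
  rcases claim x y w with rfl | h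
  · exact absurd rfl hne
  · exact h

end Aux

/-- There is a function `f : ℝ → ℕ` such that for every
`λ ∈ (-2, -1]`, every connected signed graph `S` on a finite nonempty vertex
set with `λ_min(S) ≥ λ` and minimum degree at least `f λ` is switching
equivalent to a complete graph (and hence `λ_min(S) = -1`). -/
theorem statement0 :
    ∃ f : ℝ → ℕ, ∀ lam : ℝ, -2 < lam → lam ≤ -1 →
      ∀ (V : Type) [Fintype V] [DecidableEq V] [Nonempty V] (A : Matrix V V ℝ),
        A.IsSymm → (∀ i, A i i = 0) →
        (∀ u v, A u v = 0 ∨ A u v = 1 ∨ A u v = -1) →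
        (SimpleGraph.fromRel fun u v => A u v ≠ 0).Connected →
        lam ≤ lmin A →
        f lam ≤ minDeg (SimpleGraph.fromRel fun u v => A u v ≠ 0) →
        SwitchEquiv A (Matrix.of fun u v : V => if u = v then 0 else 1) ∧ lmin A = -1 := by
  classical
  refine ⟨fun lam => ⌈(100:ℝ) * (1/(lam+2) + 1)^2⌉₊, ?_⟩
  intro lam hlam2 hlam1 V _ _ _ A hsymm hdiag hrange hconn hlmin hmindeg
  have hsym : ∀ u v : V, A u v = A v u := fun u v => by
    conv_lhs => rw [← hsymm]
    rfl
  have hH : A.IsHermitian := by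
    show Aᴴ = A
    ext i j
    simp only [Matrix.conjTranspose_apply, star_trivial]
    exact (hsym i j).symm
  have hkey := rayleigh_key A hH lam hlmin
  set ε : ℝ := lam + 2 with hεdef
  have hε : (0:ℝ) < ε := by rw [hεdef]; linarith
  have hε1 : ε ≤ 1 := by rw [hεdef]; linarith
  set iε : ℝ := 1/ε with hiεdef
  have hiε1 : 1 ≤ iε := by
    rw [hiεdef]
    exact (le_div_iff₀ hε).mpr (by linarith)
  have hεiε : ε * iε = 1 := by
    rw [hiεdef]; field_simp
  set D : ℕ := ⌈(100:ℝ) * (1/(lam+2) + 1)^2⌉₊ with hDdef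
  have hDlow : (100:ℝ) * (iε + 1)^2 ≤ D := by
    rw [hDdef, hiεdef, hεdef]
    exact Nat.le_ceil _
  -- degree bound
  set G := SimpleGraph.fromRel (fun u v : V => A u v ≠ 0) with hG
  haveI hdr : DecidableRel G.Adj := Classical.decRel _
  have hdeg : ∀ v : V, D ≤ (Finset.univ.filter fun w => A v w ≠ 0).card := by
    intro v
    have h1 : minDeg G ≤ G.degree v := by
      unfold minDeg
      have := SimpleGraph.minDegree_le_degree (G := G) v
      convert this using 2
    have h3 : G.neighborFinset v = Finset.univ.filter (fun w => A v w ≠ 0) := by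
      ext w
      rw [SimpleGraph.mem_neighborFinset, Finset.mem_filter]
      constructor
      · intro hadj
        rw [hG, SimpleGraph.fromRel_adj] at hadj
        obtain ⟨hne, h | h⟩ := hadj
        · exact ⟨Finset.mem_univ w, h⟩
        · exact ⟨Finset.mem_univ w, by rw [hsym v w]; exact h⟩
      · rintro ⟨-, h⟩
        rw [hG, SimpleGraph.fromRel_adj]
        exact ⟨fun he => h (he ▸ hdiag v), Or.inl h⟩
    have h2 : G.degree v = (Finset.univ.filter fun w => A v w ≠ 0).card := by
      rw [SimpleGraph.degree, h3]
    rw [← h2]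
    exact le_trans hmindeg h1
  -- numeric thresholds
  set mB : ℕ := ⌈(10:ℝ)*iε^2⌉₊ with hmBdef
  have hmBlow : (10:ℝ)*iε^2 ≤ mB := by rw [hmBdef]; exact Nat.le_ceil _
  have hmBhigh : (mB:ℝ) < 10*iε^2 + 1 := by
    rw [hmBdef]
    exact Nat.ceil_lt_add_one (by positivity)
  have hdiv8 : 8/(lam+2) = 8*iε := by rw [hiεdef, hεdef]; ring
  have hdiv4 : 4/(lam+2) = 4*iε := by rw [hiεdef, hεdef]; ring
  have hc1 : (lam+2) * (2 + (mB:ℝ)) > 2 + 8/(lam+2) := by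
    rw [hdiv8, ← hεdef]
    nlinarith [hmBlow, hεiε, hiε1, hε, mul_le_mul_of_nonneg_left hmBlow (le_of_lt hε)]
  have hc2 : (lam+2) * (1 + (mB:ℝ)) > 1 + 4/(lam+2) := by
    rw [hdiv4, ← hεdef]
    nlinarith [hmBlow, hεiε, hiε1, hε, mul_le_mul_of_nonneg_left hmBlow (le_of_lt hε)]
  have hc3 : (D:ℝ) ≥ 2*(mB:ℝ) + 3 + 4/(lam+2) := by
    rw [hdiv4]
    nlinarith [hDlow, hmBhigh, hiε1]
  -- no distance-two pairs
  have hnd : ∀ u x y : V, A u x ≠ 0 → A u y ≠ 0 → x ≠ y → A x y ≠ 0 := by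
    intro u x y h1 h2 h3
    by_contra h4
    exact nodist2 A lam hsym hdiag hrange hlam2 hlam1 hkey D mB hdeg hc1 hc2 hc3 h1 h2 h3 h4
  have hcomp : ∀ x y : V, x ≠ y → A x y ≠ 0 :=
    complete_of_connected A hsym hdiag hconn hnd
  -- the switching function
  obtain ⟨v₀⟩ := (inferInstance : Nonempty V)
  set d : V → ℝ := fun v => if v = v₀ then 1 else A v₀ v with hddef
  have dv₀ : d v₀ = 1 := by simp [hddef]
  have dother : ∀ v, v ≠ v₀ → d v = A v₀ v := fun v h => by simp [hddef, h]
  have hd : ∀ v, d v = 1 ∨ d v = -1 := by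
    intro v
    by_cases h : v = v₀
    · left; simp [hddef, h]
    · have := hcomp v₀ v (Ne.symm h)
      rcases hrange v₀ v with h1 | h1 | h1
      · exact absurd h1 this
      · left; simp [hddef, h, h1]
      · right; simp [hddef, h, h1]
  have hdsq : ∀ v, d v * d v = 1 := fun v => by
    rcases hd v with h | h <;> rw [h] <;> norm_num
  have hswitch : ∀ u v : V, u ≠ v → d u * A u v * d v = 1 := by
    intro u v huv
    by_cases hu : u = v₀
    · subst hu
      have h := hcomp u v huv
      have h1 := sq_one A lam hsym hdiag hrange hlam2 hlam1 hkey h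
      rw [dv₀, dother v (fun hh => huv (hh ▸ rfl))]
      calc 1 * A u v * A u v = A u v * A u v := by ring
        _ = 1 := h1
    · by_cases hv : v = v₀
      · subst hv
        have h := hcomp u v huv
        have h1 := sq_one A lam hsym hdiag hrange hlam2 hlam1 hkey h
        rw [dv₀, dother u hu]
        calc A v u * A u v * 1 = A u v * A u v := by rw [hsym v u]; ring
          _ = 1 := h1
      · have e1 : A v₀ u ≠ 0 := hcomp v₀ u (fun h => hu h.symm)
        have e2 : A u v ≠ 0 := hcomp u v huv
        have e3 : A v₀ v ≠ 0 := hcomp v₀ v (fun h => hv h.symm)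
        have htr := triangle A lam hsym hdiag hrange hlam2 hlam1 hkey e1 e2 e3
        rw [dother u hu, dother v hv]
        exact htr
  constructor
  · refine ⟨Equiv.refl V, d, hd, fun u v => ?_⟩
    by_cases h : u = v
    · subst h
      simp [Matrix.of_apply, hdiag u]
    · simp only [Matrix.of_apply, if_neg h, Equiv.refl_apply]
      exact (hswitch u v h).symm
  -- lmin = -1
  · have hA1 : ∀ u v : V, A u v = d u * d v - (if u = v then 1 else 0) := by
      intro u v
      by_cases h : u = v
      · subst h
        rw [if_pos rfl, hdiag u, hdsq u]; ring
      · rw [if_neg h]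
        have hs := hswitch u v h
        have h2 := hdsq u
        have h3 := hdsq v
        have : d u * (d u * A u v * d v) * d v = d u * 1 * d v := by rw [hs]
        calc A u v = (d u * d u) * A u v * (d v * d v) := by rw [h2, h3]; ring
          _ = d u * (d u * A u v * d v) * d v := by ring
          _ = d u * 1 * d v := by rw [hs]
          _ = d u * d v - 0 := by ring
    have hquad : ∀ c : V → ℝ, c ⬝ᵥ (A *ᵥ c) = (∑ j, d j * c j)^2 - ∑ j, (c j)^2 := by
      intro c
      rw [dot_expand]
      have e2 : ∀ u : V, ∑ v, c u * A u v * c v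
          = (d u * c u) * (∑ v, d v * c v) - c u * c u := by
        intro u
        have e3 : ∀ v : V, c u * A u v * c v
            = (d u * c u) * (d v * c v) - (if u = v then c u * c v else 0) := by
          intro v
          rw [hA1 u v]
          by_cases h : u = v
          · subst h; rw [if_pos rfl, if_pos rfl]; ring
          · rw [if_neg h, if_neg h]; ring
        rw [Finset.sum_congr rfl (fun v _ => e3 v), Finset.sum_sub_distrib, ← Finset.mul_sum]
        congr 1
        rw [Finset.sum_ite_eq Finset.univ u (fun v => c u * c v), if_pos (Finset.mem_univ u)]
      rw [Finset.sum_congr rfl (fun u _ => e2 u), Finset.sum_sub_distrib, ← Finset.sum_mul]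
      congr 1
      · rw [sq]
      · exact Finset.sum_congr rfl (fun u _ => by ring)
    have hlow : ∀ i, (-1:ℝ) ≤ hH.eigenvalues i := by
      intro i
      have h1 := eigen_quad A hH i
      have h2 := evec_norm A hH i
      rw [hquad] at h1
      nlinarith [sq_nonneg (∑ j, d j * (⇑(hH.eigenvectorBasis i) : V → ℝ) j), h1, h2]
    -- find a second vertex
    have hD1 : 1 ≤ D := by
      rw [hDdef]
      rw [Nat.one_le_ceil_iff]
      positivity
    have hNv : (Finset.univ.filter fun w => A v₀ w ≠ 0).Nonempty := by
      rw [← Finset.card_pos]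
      exact lt_of_lt_of_le hD1 (hdeg v₀)
    obtain ⟨y₀, hy₀mem⟩ := hNv
    have hy₀ : A v₀ y₀ ≠ 0 := (Finset.mem_filter.mp hy₀mem).2
    have hy₀ne : y₀ ≠ v₀ := fun h => hy₀ (h ▸ hdiag v₀)
    -- kernel vector
    set c : V → ℝ := fun v => if v = v₀ then d y₀ else if v = y₀ then -(d v₀) else 0 with hcdef
    have hdzero : ∑ v, d v * c v = 0 := by
      have e : ∀ v : V, d v * c v
          = (if v = v₀ then d v * d y₀ else 0) + (if v = y₀ then -(d v * d v₀) else 0) := by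
        intro v
        simp only [hcdef]
        by_cases h1 : v = v₀
        · subst h1; rw [if_pos rfl, if_pos rfl, if_neg (Ne.symm hy₀ne)]; ring
        · by_cases h2 : v = y₀
          · subst h2; rw [if_neg h1, if_pos rfl, if_neg h1, if_pos rfl]; ring
          · rw [if_neg h1, if_neg h2, if_neg h1, if_neg h2]; ring
      rw [Finset.sum_congr rfl (fun v _ => e v), Finset.sum_add_distrib,
        Finset.sum_ite_eq' Finset.univ v₀ (fun v => d v * d y₀),
        Finset.sum_ite_eq' Finset.univ y₀ (fun v => -(d v * d v₀)),
        if_pos (Finset.mem_univ v₀), if_pos (Finset.mem_univ y₀)]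
      ring
    have hker : (A + 1) *ᵥ c = 0 := by
      funext u
      show ∑ v, (A + 1) u v * c v = 0
      have e : ∀ v : V, (A + 1) u v * c v = d u * (d v * c v) := by
        intro v
        rw [Matrix.add_apply, Matrix.one_apply, hA1 u v]
        ring
      rw [Finset.sum_congr rfl (fun v _ => e v), ← Finset.mul_sum, hdzero, mul_zero]
    have hc0 : c ≠ 0 := by
      intro h
      have h2 := congrFun h v₀
      simp only [hcdef, Pi.zero_apply, if_pos rfl] at h2
      rcases hd y₀ with h' | h' <;> rw [h'] at h2 <;> norm_num at h2
    have hdet : (A + 1).det = 0 := by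
      rw [← Matrix.exists_mulVec_eq_zero_iff]
      exact ⟨c, hc0, hker⟩
    have hprod : ∏ i, (hH.eigenvalues i + 1) = 0 := by
      rw [← det_add_one A hH]; exact hdet
    obtain ⟨i, -, hi⟩ := Finset.prod_eq_zero_iff.mp hprod
    have hieq : hH.eigenvalues i = -1 := by linarith
    have hup : lmin A ≤ -1 := by
      rw [← hieq]; exact lmin_le_eigen A hH i
    have hlo : (-1:ℝ) ≤ lmin A := le_lmin A hH (-1) hlow
    linarith
end

section
/- Let (f_n)_{n∈ℕ} be a sequence of complex polynomials whose degrees are bounded by a fixed integer N, and suppose the sequence converges coefficient-wise to a nonzero polynomial f. Then for every ζ ∈ ℂ, the following are equivalent: (i) f(ζ) = 0; (ii) for every ε > 0 there exists n₀ ∈ ℕ such that for all n > n₀ the polynomial f_n has a root in the open disk {w ∈ ℂ : |w − ζ| < ε}. -/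
/-!
If `g ζ = 0`, pick `w` in the `ε`-ball around `ζ` with `g w ≠ 0`. Factoring over the roots, a
polynomial `p` of degree at most `N` without roots in that ball satisfies
`‖p w‖ ≤ 2 ^ N * ‖p ζ‖`, since `‖w - a‖ ≤ 2 * ‖ζ - a‖` for each root `a`. As `f n ζ → 0` while
`f n w → g w ≠ 0`, this inequality fails for large `n`, so `f n` has a root in the ball.

Conversely, with degrees bounded, coefficient-wise convergence makes `f n z → g ζ` jointly as
`n → ∞` and `z → ζ`; if `g ζ ≠ 0`, then `f n` has no root near `ζ` for all large `n`.
-/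

open Filter Topology Polynomial

namespace Polynomial

variable {ι : Type*} {l : Filter ι} {N : ℕ}

section Convergence

variable {R : Type*}

theorem natDegree_le_of_tendsto_coeff [Semiring R] [TopologicalSpace R] [T2Space R] [l.NeBot]
    {f : ι → R[X]} {g : R[X]} (hdeg : ∀ i, (f i).natDegree ≤ N)
    (hconv : ∀ k, Tendsto (fun i => (f i).coeff k) l (𝓝 (g.coeff k))) :
    g.natDegree ≤ N := by
  refine natDegree_le_iff_coeff_eq_zero.mpr fun k hk => tendsto_nhds_unique (hconv k) ?_
  have hk' : ∀ i, (f i).coeff k = 0 := fun i =>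
    coeff_eq_zero_of_natDegree_lt ((hdeg i).trans_lt (by exact_mod_cast hk))
  simpa only [hk'] using tendsto_const_nhds

theorem tendsto_eval_of_tendsto_coeff [CommSemiring R] [TopologicalSpace R]
    [IsTopologicalSemiring R] {f : ι → R[X]} {g : R[X]} (hdeg : ∀ i, (f i).natDegree ≤ N)
    (hgN : g.natDegree ≤ N)
    (hconv : ∀ k, Tendsto (fun i => (f i).coeff k) l (𝓝 (g.coeff k)))
    {z : ι → R} {ζ : R} (hz : Tendsto z l (𝓝 ζ)) :
    Tendsto (fun i => (f i).eval (z i)) l (𝓝 (g.eval ζ)) := by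
  simp only [fun i => eval_eq_sum_range' (Nat.lt_succ_of_le (hdeg i)),
    eval_eq_sum_range' (Nat.lt_succ_of_le hgN)]
  exact tendsto_finsetSum _ fun k _ => (hconv k).mul (hz.pow k)

end Convergence

variable {K : Type*} [NontriviallyNormedField K] [IsAlgClosed K]

theorem norm_eval_eq_norm_leadingCoeff_mul_prod_roots (p : K[X]) (x : K) :
    ‖p.eval x‖ = ‖p.leadingCoeff‖ * (p.roots.map fun a => ‖x - a‖).prod := by
  conv_lhs =>
    rw [← C_leadingCoeff_mul_prod_multiset_X_sub_C (IsAlgClosed.card_roots_eq_natDegree (p := p))]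
  rw [eval_mul, eval_C, norm_mul, eval_multiset_prod, Multiset.map_map]
  congr 1
  simpa [Multiset.map_map, Function.comp_def] using
    map_multiset_prod (normHom : K →*₀ ℝ) (p.roots.map fun a => x - a)

theorem norm_eval_le_pow_natDegree_mul_norm_eval {p : K[X]} {w ζ : K} {c : ℝ}
    (h : ∀ a ∈ p.roots, ‖w - a‖ ≤ c * ‖ζ - a‖) :
    ‖p.eval w‖ ≤ c ^ p.natDegree * ‖p.eval ζ‖ := by
  rw [norm_eval_eq_norm_leadingCoeff_mul_prod_roots, norm_eval_eq_norm_leadingCoeff_mul_prod_roots,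
    ← IsAlgClosed.card_roots_eq_natDegree, mul_left_comm, ← Multiset.prod_replicate,
    ← Multiset.map_const', ← Multiset.prod_map_mul]
  gcongr
  exact Multiset.prod_map_le_prod_map₀ _ _ (fun _ _ => norm_nonneg _) h

theorem eventually_exists_eval_eq_zero_near {f : ι → K[X]} {g : K[X]}
    (hdeg : ∀ i, (f i).natDegree ≤ N) (hg : g ≠ 0)
    (heval : ∀ z, Tendsto (fun i => (f i).eval z) l (𝓝 (g.eval z)))
    {ζ : K} (hζ : g.eval ζ = 0) {ε : ℝ} (hε : 0 < ε) :
    ∀ᶠ i in l, ∃ z, ‖z - ζ‖ < ε ∧ (f i).eval z = 0 := by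
  obtain ⟨w, ⟨-, hgw⟩, hw⟩ := (dense_univ.sdiff_finite (finite_setOfPred_isRoot hg))
    |>.exists_mem_open Metric.isOpen_ball ⟨ζ, Metric.mem_ball_self hε⟩
  have hlim : Tendsto (fun i => 2 ^ N * ‖(f i).eval ζ‖ - ‖(f i).eval w‖) l
      (𝓝 (-‖g.eval w‖)) := by
    simpa [hζ] using ((heval ζ).norm.const_mul (2 ^ N)).sub (heval w).norm
  filter_upwards [hlim.eventually_lt_const (neg_neg_of_pos (norm_pos_iff.2 hgw))] with i hi
  by_contra! hno
  have hfar : ∀ a ∈ (f i).roots, ‖w - a‖ ≤ 2 * ‖ζ - a‖ := by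
    intro a ha
    have hεa : ε ≤ ‖ζ - a‖ := by
      rw [norm_sub_rev]
      exact not_lt.1 fun h => hno a h (isRoot_of_mem_roots ha)
    calc ‖w - a‖ ≤ ‖w - ζ‖ + ‖ζ - a‖ := norm_sub_le_norm_sub_add_norm_sub _ _ _
      _ ≤ 2 * ‖ζ - a‖ := by rw [← dist_eq_norm]; linarith [Metric.mem_ball.1 hw]
  have := (norm_eval_le_pow_natDegree_mul_norm_eval hfar).trans
    (mul_le_mul_of_nonneg_right (pow_le_pow_right₀ one_le_two (hdeg i)) (norm_nonneg _))
  linarith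

end Polynomial

/-- If a sequence of complex polynomials of degree at most `N`
converges coefficient-wise to a nonzero polynomial `g`, then `ζ` is a root of
`g` iff eventually every `f n` has a root in every disk around `ζ`. -/
theorem statement4 (N : ℕ) (f : ℕ → Polynomial ℂ) (g : Polynomial ℂ)
    (hdeg : ∀ n, (f n).degree ≤ N) (hg : g ≠ 0)
    (hconv : ∀ k : ℕ, Tendsto (fun n => (f n).coeff k) atTop (nhds (g.coeff k)))
    (ζ : ℂ) :
    g.eval ζ = 0 ↔
      ∀ ε : ℝ, 0 < ε → ∃ n₀ : ℕ, ∀ n > n₀,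
        ∃ z : ℂ, ‖z - ζ‖ < ε ∧ (f n).eval z = 0 := by
  have hfN : ∀ n, (f n).natDegree ≤ N := fun n => natDegree_le_iff_degree_le.mpr (hdeg n)
  have hgN := natDegree_le_of_tendsto_coeff hfN hconv
  have eventually_iff {P : ℕ → Prop} : (∀ᶠ n in atTop, P n) ↔ ∃ n₀, ∀ n > n₀, P n := by
    simp [atTop_basis_Ioi.eventually_iff]
  constructor
  · intro hζ ε hε
    exact eventually_iff.1 <| eventually_exists_eval_eq_zero_near hfN hg
      (fun z => tendsto_eval_of_tendsto_coeff hfN hgN hconv tendsto_const_nhds) hζ hε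
  · intro h
    by_contra hζ
    have hconv' (k : ℕ) : Tendsto (fun p : ℕ × ℂ => (f p.1).coeff k) (atTop ×ˢ 𝓝 ζ)
        (𝓝 (g.coeff k)) := (hconv k).comp tendsto_fst
    have hjoint : Tendsto (fun p : ℕ × ℂ => (f p.1).eval p.2) (atTop ×ˢ 𝓝 ζ) (𝓝 (g.eval ζ)) :=
      tendsto_eval_of_tendsto_coeff (fun p => hfN p.1) hgN hconv' tendsto_snd
    obtain ⟨P, hP, Q, hQ, hPQ⟩ := eventually_prod_iff.1 (hjoint.eventually_ne hζ)
    obtain ⟨ε, hε, hball⟩ := Metric.eventually_nhds_iff.1 hQ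
    obtain ⟨n, hn, z, hz, hfz⟩ := (hP.and (eventually_iff.2 (h ε hε))).exists
    exact hPQ hn (hball (by rwa [dist_eq_norm])) hfz
end

section
/- Let g(t, z) = h(z) t^N + Σ_{i=0}^{N−1} h_i(z) t^i be a polynomial in two variables t, z with complex coefficients, where h(z) is a nonzero real-rooted polynomial. Suppose that for every positive integer t the one-variable polynomial z ↦ g(t, z) is a nonconstant real-rooted polynomial, and that the limit δ = lim_{t→∞} min{x ∈ ℝ : g(t, x) = 0} exists. Then h has a real root and δ = min{x ∈ ℝ : h(x) = 0}. -/
open Filter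

/-- A complex polynomial is real-rooted if all of its roots are real. -/
def RealRootedC (p : Polynomial ℂ) : Prop :=
  ∀ z : ℂ, p.eval z = 0 → z.im = 0

/-!
Write `s t` for the smallest real root of `g t`. The rescaled polynomials `g t / tᴺ` converge
to `h` locally uniformly, so `g t (s t) = 0` and `s t → δ` force `h δ = 0`. Left of its smallest
root a real-rooted polynomial is a product of factors `|x - a|` with `a ≥ x`, so its modulus is
decreasing there; passing to the limit, `|h|` is decreasing on `(-∞, δ)`. A root `m < δ` of `h`
would therefore make `h` vanish on all of `(m, δ)`, which is impossible for `h ≠ 0`.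
-/

open Polynomial Set Topology

lemma RealRootedC.ofReal_re {p : ℂ[X]} (hp : RealRootedC p) {z : ℂ} (hz : p.eval z = 0) :
    ((z.re : ℝ) : ℂ) = z :=
  Complex.ext rfl (hp z hz).symm

lemma finite_setOf_eval_ofReal_eq_zero {p : ℂ[X]} (hp : p ≠ 0) :
    {x : ℝ | p.eval (x : ℂ) = 0}.Finite :=
  (finite_setOfPred_isRoot hp).preimage Complex.ofReal_injective.injOn

lemma RealRootedC.isLeast_csInf {p : ℂ[X]} (hp : RealRootedC p) (hdeg : 0 < p.natDegree) :
    IsLeast {x : ℝ | p.eval (x : ℂ) = 0} (sInf {x : ℝ | p.eval (x : ℂ) = 0}) := by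
  obtain ⟨z, hz⟩ := Complex.exists_root (natDegree_pos_iff_degree_pos.mp hdeg)
  have hne : {x : ℝ | p.eval (x : ℂ) = 0}.Nonempty :=
    ⟨z.re, by rw [Set.mem_ofPred_eq, hp.ofReal_re hz]; exact hz⟩
  have hfin := finite_setOf_eval_ofReal_eq_zero (ne_zero_of_natDegree_gt hdeg)
  exact ⟨hne.csInf_mem hfin, fun x hx => csInf_le hfin.bddBelow hx⟩

lemma RealRootedC.antitoneOn_norm_eval {p : ℂ[X]} (hp : RealRootedC p) {s : ℝ}
    (hs : s ∈ lowerBounds {x : ℝ | p.eval (x : ℂ) = 0}) :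
    AntitoneOn (fun x : ℝ => ‖p.eval (x : ℂ)‖) (Iic s) := by
  intro x hx y hy hxy
  have hnorm (w : ℂ) : ‖p.eval w‖ = ‖p.leadingCoeff‖ * (p.roots.map (‖w - ·‖)).prod := by
    rw [(IsAlgClosed.splits p).eval_eq_prod_roots, norm_mul,
      ← normHom_apply (Multiset.prod _), map_multiset_prod, Multiset.map_map]
    rfl
  simp only [hnorm]
  refine mul_le_mul_of_nonneg_left (Multiset.prod_map_le_prod_map₀ _ _
    (fun _ _ => norm_nonneg _) fun a ha => ?_) (norm_nonneg _)
  have hroot : p.eval a = 0 := isRoot_of_mem_roots ha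
  have hsa : s ≤ a.re := hs (by rw [Set.mem_ofPred_eq, hp.ofReal_re hroot]; exact hroot)
  rw [← hp.ofReal_re hroot, ← Complex.ofReal_sub, ← Complex.ofReal_sub, Complex.norm_real,
    Complex.norm_real, Real.norm_of_nonpos, Real.norm_of_nonpos] <;>
    linarith [mem_Iic.mp hx, mem_Iic.mp hy]

lemma tendsto_eval_div_pow {N : ℕ} (h : ℂ[X]) (hi : Fin N → ℂ[X]) {u : ℕ → ℂ} {z : ℂ}
    (hu : Tendsto u atTop (𝓝 z)) :
    Tendsto (fun t : ℕ => (C ((t : ℂ) ^ N) * h +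
      ∑ i : Fin N, C ((t : ℂ) ^ (i : ℕ)) * hi i).eval (u t) / (t : ℂ) ^ N)
      atTop (𝓝 (h.eval z)) := by
  have heval (p : ℂ[X]) : Tendsto (fun t => p.eval (u t)) atTop (𝓝 (p.eval z)) :=
    (p.continuous.tendsto z).comp hu
  have hpow (i : Fin N) : Tendsto (fun t : ℕ => (t : ℂ) ^ (i : ℕ) / (t : ℂ) ^ N) atTop (𝓝 0) := by
    have := ((tendsto_pow_div_pow_atTop_zero i.isLt).comp tendsto_natCast_atTop_atTop).ofReal
    simpa [Function.comp_def] using this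
  have hlim := (heval h).add (tendsto_finsetSum Finset.univ fun i _ => (hpow i).mul (heval (hi i)))
  simp only [zero_mul, Finset.sum_const_zero, add_zero] at hlim
  refine hlim.congr' ?_
  filter_upwards [eventually_ne_atTop 0] with t ht
  have htN : (t : ℂ) ^ N ≠ 0 := pow_ne_zero _ (Nat.cast_ne_zero.mpr ht)
  simp only [eval_add, eval_mul, eval_C, eval_finsetSum, add_div, Finset.sum_div]
  field_simp

lemma antitoneOn_norm_eval_of_tendsto {g : ℕ → ℂ[X]} {h : ℂ[X]} {c : ℕ → ℂ} {s : ℕ → ℝ} {δ : ℝ}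
    (hconv : ∀ x : ℝ, Tendsto (fun t => (g t).eval (x : ℂ) / c t) atTop (𝓝 (h.eval (x : ℂ))))
    (hroots : ∀ᶠ t in atTop,
      RealRootedC (g t) ∧ s t ∈ lowerBounds {x : ℝ | (g t).eval (x : ℂ) = 0})
    (hs : Tendsto s atTop (𝓝 δ)) :
    AntitoneOn (fun x : ℝ => ‖h.eval (x : ℂ)‖) (Iio δ) := by
  intro x _ y hy hxy
  refine le_of_tendsto_of_tendsto (hconv y).norm (hconv x).norm ?_
  filter_upwards [hroots, hs.eventually (lt_mem_nhds hy)] with t ⟨hrr, hlower⟩ hyt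
  rw [norm_div, norm_div]
  gcongr
  exact hrr.antitoneOn_norm_eval hlower (mem_Iic.mpr (hxy.trans hyt.le)) (mem_Iic.mpr hyt.le) hxy

lemma isLeast_of_antitoneOn_norm_eval {p : ℂ[X]} (hp : p ≠ 0) {δ : ℝ} (hδ : p.eval (δ : ℂ) = 0)
    (hanti : AntitoneOn (fun x : ℝ => ‖p.eval (x : ℂ)‖) (Iio δ)) :
    IsLeast {x : ℝ | p.eval (x : ℂ) = 0} δ := by
  refine ⟨hδ, fun m hm => not_lt.mp fun hmδ => ?_⟩
  have hsub : Ioo m δ ⊆ {x : ℝ | p.eval (x : ℂ) = 0} := fun x hx =>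
    norm_le_zero_iff.mp <| (hanti hmδ hx.2 hx.1.le).trans_eq (norm_eq_zero.mpr hm)
  exact (Ioo_infinite hmδ).mono hsub (finite_setOf_eval_ofReal_eq_zero hp)

theorem statement6_general (N : ℕ) (h : Polynomial ℂ) (hi : Fin N → Polynomial ℂ)
    (g : ℕ → Polynomial ℂ) (δ : ℝ)
    (hg : ∀ t : ℕ, g t =
      Polynomial.C ((t : ℂ) ^ N) * h + ∑ i : Fin N, Polynomial.C ((t : ℂ) ^ (i : ℕ)) * hi i)
    (hh0 : h ≠ 0)
    (hgrr : ∀ t : ℕ, 1 ≤ t → 0 < (g t).natDegree ∧ RealRootedC (g t))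
    (hlim : Tendsto (fun t : ℕ => sInf {x : ℝ | (g t).eval (x : ℂ) = 0}) atTop (nhds δ)) :
    (∃ x : ℝ, h.eval (x : ℂ) = 0) ∧ δ = sInf {x : ℝ | h.eval (x : ℂ) = 0} := by
  have hconv {u : ℕ → ℂ} {z : ℂ} (hu : Tendsto u atTop (𝓝 z)) :
      Tendsto (fun t => (g t).eval (u t) / (t : ℂ) ^ N) atTop (𝓝 (h.eval z)) := by
    simpa only [hg] using tendsto_eval_div_pow h hi hu
  have hleast : ∀ᶠ t in atTop, RealRootedC (g t) ∧ IsLeast {x : ℝ | (g t).eval (x : ℂ) = 0}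
      (sInf {x : ℝ | (g t).eval (x : ℂ) = 0}) := by
    filter_upwards [eventually_ge_atTop 1] with t ht
    obtain ⟨hdeg, hrr⟩ := hgrr t ht
    exact ⟨hrr, hrr.isLeast_csInf hdeg⟩
  have hδ : h.eval (δ : ℂ) = 0 := by
    refine tendsto_nhds_unique (hconv hlim.ofReal) (tendsto_const_nhds.congr' ?_)
    filter_upwards [hleast] with t ht
    rw [ht.2.1, zero_div]
  have hanti := antitoneOn_norm_eval_of_tendsto (fun _ => hconv tendsto_const_nhds)
    (hleast.mono fun t ht => ⟨ht.1, ht.2.2⟩) hlim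
  exact ⟨⟨δ, hδ⟩, (isLeast_of_antitoneOn_norm_eval hh0 hδ hanti).csInf_eq.symm⟩

/-- Let `g(t,z) = h(z) tᴺ + Σ_{i<N} h_i(z) tⁱ` with `h` a
nonzero real-rooted polynomial. If for every positive integer `t` the
polynomial `z ↦ g(t,z)` is nonconstant and real-rooted, and its smallest real
root tends to `δ` as `t → ∞`, then `h` has a real root and `δ` is the smallest
real root of `h`. -/
theorem statement6 (N : ℕ) (h : Polynomial ℂ) (hi : Fin N → Polynomial ℂ)
    (g : ℕ → Polynomial ℂ) (δ : ℝ)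
    (hg : ∀ t : ℕ, g t =
      Polynomial.C ((t : ℂ) ^ N) * h + ∑ i : Fin N, Polynomial.C ((t : ℂ) ^ (i : ℕ)) * hi i)
    (hh0 : h ≠ 0) (hhrr : RealRootedC h)
    (hgrr : ∀ t : ℕ, 1 ≤ t → 0 < (g t).natDegree ∧ RealRootedC (g t))
    (hlim : Tendsto (fun t : ℕ => sInf {x : ℝ | (g t).eval (x : ℂ) = 0}) atTop (nhds δ)) :
    (∃ x : ℝ, h.eval (x : ℂ) = 0) ∧ δ = sInf {x : ℝ | h.eval (x : ℂ) = 0} :=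
  statement6_general N h hi g δ hg hh0 hgrr hlim
end

section
/- Let S be a signed graph whose underlying graph is complete, i.e., whose adjacency matrix A has every off-diagonal entry equal to 1 or −1. If λ_min(S) ≥ −√2, then S is switching equivalent to a complete graph; that is, there is a diagonal matrix D with ±1 diagonal entries such that D A D = J − I. -/
open Filter Matrix

lemma rayleigh_lower {V : Type} [Fintype V] [DecidableEq V] {A : Matrix V V ℝ}
    (hA : A.IsHermitian) (x : V → ℝ) :
    (⨅ i, hA.eigenvalues i) * (x ⬝ᵥ x) ≤ x ⬝ᵥ (A *ᵥ x) := by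
  classical
  cases isEmpty_or_nonempty V
  · simp [dotProduct]
  set U : Matrix V V ℝ := (hA.eigenvectorUnitary : Matrix V V ℝ) with hU
  set y : V → ℝ := Uᵀ *ᵥ x with hy
  have hUH : star U = Uᵀ := by
    ext i j; simp [conjTranspose_apply]
  have h1 : U * star U = 1 := Matrix.mem_unitaryGroup_iff.mp hA.eigenvectorUnitary.2
  have hxAx : x ⬝ᵥ (A *ᵥ x) = ∑ i, hA.eigenvalues i * (y i * y i) := by
    conv_lhs => rw [hA.spectral_theorem, Unitary.conjStarAlgAut_apply]
    rw [← hU, hUH]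
    have hyv : x ᵥ* U = y := by rw [hy, mulVec_transpose]
    rw [← mulVec_mulVec, ← mulVec_mulVec, dotProduct_mulVec, hyv, ← hy]
    unfold dotProduct
    congr 1; ext i
    simp only [mulVec_diagonal, Function.comp, RCLike.ofReal_real_eq_id, id]
    ring
  have hxx : x ⬝ᵥ x = ∑ i, y i * y i := by
    have : ∑ i, y i * y i = y ⬝ᵥ y := rfl
    rw [this, hy, dotProduct_mulVec, vecMul_transpose, mulVec_mulVec, ← hUH, h1, one_mulVec]
  rw [hxAx, hxx, Finset.mul_sum]
  apply Finset.sum_le_sum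
  intro i _
  have h1 : (⨅ j, hA.eigenvalues j) ≤ hA.eigenvalues i :=
    ciInf_le (Finite.bddBelow_range _) i
  nlinarith [mul_self_nonneg (y i)]

/-- A signed graph whose underlying graph is complete and
with `λ_min ≥ -√2` is switching equivalent to a complete graph:
`D A D = J - I` for some `±1` diagonal `D`. -/
theorem statement10 (V : Type) [Fintype V] [DecidableEq V] [Nonempty V]
    (A : Matrix V V ℝ) (hsym : A.IsSymm) (hdiag : ∀ i, A i i = 0)
    (hcomp : ∀ u v : V, u ≠ v → A u v = 1 ∨ A u v = -1)
    (hmin : -Real.sqrt 2 ≤ lmin A) :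
    ∃ d : V → ℝ, (∀ i, d i = 1 ∨ d i = -1) ∧
      ∀ u v, d u * A u v * d v = if u = v then 0 else 1 := by
  have hA : A.IsHermitian := by
    ext i j
    simp only [conjTranspose_apply, RCLike.star_def, starRingEnd_apply, star_trivial]
    exact hsym.apply i j
  have hlmin : lmin A = ⨅ i, hA.eigenvalues i := by rw [lmin, dif_pos hA]
  have hsq : ∀ u v : V, u ≠ v → A u v * A u v = 1 := by
    intro u v h
    rcases hcomp u v h with h' | h' <;> rw [h'] <;> norm_num
  -- every triangle is positive
  have htri : ∀ a b c : V, a ≠ b → a ≠ c → b ≠ c → A a b * A b c * A a c = 1 := by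
    intro a b c hab hac hbc
    by_contra hne
    have hprod : A a b * A b c * A a c = -1 := by
      rcases hcomp a b hab with h1 | h1 <;> rcases hcomp b c hbc with h2 | h2 <;>
        rcases hcomp a c hac with h3 | h3 <;> rw [h1, h2, h3] at hne ⊢ <;> norm_num at hne <;> norm_num
    set x : V → ℝ := fun v => if v = a then -1 else if v = b then A a b else
      if v = c then A a c else 0 with hx
    have hsupp : ∀ v, v ≠ a → v ≠ b → v ≠ c → x v = 0 := by
      intro v h1 h2 h3; simp [hx, h1, h2, h3]
    have hxa : x a = -1 := by simp [hx]
    have hxb : x b = A a b := by simp [hx, hab.symm]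
    have hxc : x c = A a c := by simp [hx, hac.symm, hbc.symm]
    have hba : A b a = A a b := hsym.apply a b
    have hca : A c a = A a c := hsym.apply a c
    have hcb : A c b = A b c := hsym.apply b c
    have hAx : ∀ u, (A *ᵥ x) u = A u a * (-1) + A u b * A a b + A u c * A a c := by
      intro u
      show ∑ v, A u v * x v = _
      rw [← Finset.add_sum_erase _ _ (Finset.mem_univ a),
          ← Finset.add_sum_erase _ _ (Finset.mem_erase.mpr ⟨Ne.symm hab, Finset.mem_univ _⟩),
          ← Finset.add_sum_erase _ _
            (Finset.mem_erase.mpr ⟨Ne.symm hbc, Finset.mem_erase.mpr ⟨Ne.symm hac, Finset.mem_univ _⟩⟩)]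
      rw [hxa, hxb, hxc]
      have : ∑ v ∈ ((Finset.univ.erase a).erase b).erase c, A u v * x v = 0 := by
        apply Finset.sum_eq_zero
        intro v hv
        simp only [Finset.mem_erase] at hv
        rw [hsupp v hv.2.2.1 hv.2.1 hv.1, mul_zero]
      rw [this]; ring
    have hquad : x ⬝ᵥ (A *ᵥ x) = -6 := by
      show ∑ u, x u * (A *ᵥ x) u = -6
      rw [← Finset.add_sum_erase _ _ (Finset.mem_univ a),
          ← Finset.add_sum_erase _ _ (Finset.mem_erase.mpr ⟨Ne.symm hab, Finset.mem_univ _⟩),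
          ← Finset.add_sum_erase _ _
            (Finset.mem_erase.mpr ⟨Ne.symm hbc, Finset.mem_erase.mpr ⟨Ne.symm hac, Finset.mem_univ _⟩⟩)]
      have hz : ∑ v ∈ ((Finset.univ.erase a).erase b).erase c, x v * (A *ᵥ x) v = 0 := by
        apply Finset.sum_eq_zero
        intro v hv
        simp only [Finset.mem_erase] at hv
        rw [hsupp v hv.2.2.1 hv.2.1 hv.1, zero_mul]
      rw [hz, hxa, hxb, hxc, hAx a, hAx b, hAx c, hdiag a, hdiag b, hdiag c,
        hba, hca, hcb]
      have e1 := hsq a b hab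
      have e2 := hsq a c hac
      have e3 := hsq b c hbc
      nlinarith [hprod, e1, e2, e3]
    have hnorm : x ⬝ᵥ x = 3 := by
      show ∑ u, x u * x u = 3
      rw [← Finset.add_sum_erase _ _ (Finset.mem_univ a),
          ← Finset.add_sum_erase _ _ (Finset.mem_erase.mpr ⟨Ne.symm hab, Finset.mem_univ _⟩),
          ← Finset.add_sum_erase _ _
            (Finset.mem_erase.mpr ⟨Ne.symm hbc, Finset.mem_erase.mpr ⟨Ne.symm hac, Finset.mem_univ _⟩⟩)]
      have hz : ∑ v ∈ ((Finset.univ.erase a).erase b).erase c, x v * x v = 0 := by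
        apply Finset.sum_eq_zero
        intro v hv
        simp only [Finset.mem_erase] at hv
        rw [hsupp v hv.2.2.1 hv.2.1 hv.1, zero_mul]
      rw [hz, hxa, hxb, hxc]
      have e1 := hsq a b hab
      have e2 := hsq a c hac
      nlinarith
    have hray := rayleigh_lower hA x
    rw [hquad, hnorm, ← hlmin] at hray
    have h2 : Real.sqrt 2 < 2 := by
      nlinarith [Real.sq_sqrt (by norm_num : (2:ℝ) ≥ 0).le, Real.sqrt_nonneg 2]
    nlinarith
  -- now construct the switching
  obtain ⟨v0⟩ := ‹Nonempty V›
  refine ⟨fun v => if v = v0 then 1 else A v0 v, ?_, ?_⟩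
  · intro i
    by_cases h : i = v0
    · simp [h]
    · simpa [h] using hcomp v0 i (Ne.symm h)
  · intro u v
    by_cases huv : u = v
    · subst huv; simp [hdiag u]
    simp only [if_neg huv]
    by_cases hu : u = v0
    · subst hu
      have hv : ¬ v = u := fun h => huv h.symm
      simp only [if_pos rfl, if_neg hv, one_mul]
      simpa using hsq u v huv
    by_cases hv : v = v0
    · subst hv
      simp only [if_pos rfl, if_neg hu, mul_one]
      rw [hsym.apply v u]
      simpa using hsq v u fun h => hu h.symm
    · simp only [if_neg hu, if_neg hv]
      have := htri v0 u v (fun h => hu h.symm) (fun h => hv h.symm) huv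
      calc A v0 u * A u v * A v0 v = A v0 u * A u v * A v0 v := rfl
        _ = 1 := by rw [mul_right_comm] at this ⊢; linarith [this]
end

section
/- Let S be a connected signed graph on a finite nonempty vertex set with smallest eigenvalue strictly greater than −√2. Then S is switching equivalent to a complete graph; that is, there is a diagonal matrix D with ±1 diagonal entries such that D A D = J − I, where A is the adjacency matrix of S. -/
open Filter Matrix

lemma lmin_rayleigh {V : Type*} [Fintype V] [DecidableEq V]
    (A : Matrix V V ℝ) (hA : A.IsHermitian) (x : V → ℝ) :
    lmin A * (x ⬝ᵥ x) ≤ x ⬝ᵥ (A *ᵥ x) := by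
  set μ := lmin A with hμdef
  have hμ : ∀ i, μ ≤ hA.eigenvalues i := by
    intro i
    rw [hμdef, lmin, dif_pos hA]
    exact ciInf_le (Set.Finite.bddBelow (Set.finite_range _)) i
  have h1 : (A - μ • 1).PosSemidef := by
    have hspec := hA.spectral_theorem
    rw [Unitary.conjStarAlgAut_apply] at hspec
    set U := (hA.eigenvectorUnitary : Matrix V V ℝ) with hU
    have hUU : U * star U = 1 := mem_unitaryGroup_iff.mp hA.eigenvectorUnitary.2
    have key : A - μ • 1 = U * diagonal (fun i => hA.eigenvalues i - μ) * star U := by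
      have hd : diagonal (fun i => hA.eigenvalues i - μ)
          = diagonal (RCLike.ofReal ∘ hA.eigenvalues) - μ • (1 : Matrix V V ℝ) := by
        ext i j
        by_cases h : i = j <;>
          simp [diagonal_apply, Matrix.smul_apply, Matrix.one_apply, h]
      rw [hd, Matrix.mul_sub, Matrix.sub_mul, ← hspec]
      congr 1
      rw [Matrix.mul_smul, Matrix.mul_one, Matrix.smul_mul, hUU]
    rw [key, Matrix.star_eq_conjTranspose]
    exact (posSemidef_diagonal_iff.mpr
      (fun i => sub_nonneg.mpr (hμ i))).mul_mul_conjTranspose_same U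
  have h2 := h1.dotProduct_mulVec_nonneg x
  have hsx : star x = x := by simp
  rw [hsx, sub_mulVec, dotProduct_sub, smul_mulVec, one_mulVec, dotProduct_smul] at h2
  simpa using sub_nonneg.mp h2

lemma dot3 {V : Type*} [Fintype V] [DecidableEq V] (u v w : V)
    (huv : u ≠ v) (huw : u ≠ w) (hvw : v ≠ w) (a b c : ℝ) (y : V → ℝ) :
    (fun i => if i = u then a else if i = v then b else if i = w then c else 0) ⬝ᵥ y
      = a * y u + b * y v + c * y w := by
  classical
  have h : ∀ i : V, (if i = u then a else if i = v then b else if i = w then c else 0) * y i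
      = (if i = u then a * y u else 0) + ((if i = v then b * y v else 0)
        + (if i = w then c * y w else 0)) := by
    intro i
    by_cases h1 : i = u
    · subst h1; simp [huv, huw]
    · by_cases h2 : i = v
      · subst h2; simp [h1, hvw]
      · by_cases h3 : i = w
        · subst h3; simp [h1, h2]
        · simp [h1, h2, h3]
  rw [dotProduct, Finset.sum_congr rfl (fun i _ => h i), Finset.sum_add_distrib,
    Finset.sum_add_distrib]
  simp [Finset.sum_ite_eq, Finset.mem_univ]
  ring

lemma quad3 {V : Type*} [Fintype V] [DecidableEq V] (A : Matrix V V ℝ) (u v w : V)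
    (huv : u ≠ v) (huw : u ≠ w) (hvw : v ≠ w) (a b c : ℝ) :
    ((fun i => if i = u then a else if i = v then b else if i = w then c else 0) ⬝ᵥ
      (A *ᵥ (fun i => if i = u then a else if i = v then b else if i = w then c else 0))
      = a * (a * A u u + b * A u v + c * A u w)
        + b * (a * A v u + b * A v v + c * A v w)
        + c * (a * A w u + b * A w v + c * A w w))
    ∧ ((fun i => if i = u then a else if i = v then b else if i = w then c else 0) ⬝ᵥ
        (fun i => if i = u then a else if i = v then b else if i = w then c else 0)
      = a * a + b * b + c * c) := by
  classical
  set x : V → ℝ := fun i => if i = u then a else if i = v then b else if i = w then c else 0 with hx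
  have hy : ∀ i : V, (A *ᵥ x) i = a * A i u + b * A i v + c * A i w := by
    intro i
    show (fun j => A i j) ⬝ᵥ x = _
    rw [dotProduct_comm, dot3 u v w huv huw hvw a b c]
  constructor
  · rw [dot3 u v w huv huw hvw a b c, hy, hy, hy]
  · rw [dot3 u v w huv huw hvw a b c]
    simp [hx, huv, huw, hvw, Ne.symm huv, Ne.symm huw, Ne.symm hvw]


/-- A connected signed graph on a finite nonempty vertex set
with smallest eigenvalue strictly greater than `-√2` is switching equivalent to
a complete graph: `D A D = J - I` for some `±1` diagonal `D`. -/
theorem statement11 (V : Type) [Fintype V] [DecidableEq V] [Nonempty V]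
    (A : Matrix V V ℝ) (hsym : A.IsSymm) (hdiag : ∀ i, A i i = 0)
    (hent : ∀ u v, A u v = 0 ∨ A u v = 1 ∨ A u v = -1)
    (hconn : (SimpleGraph.fromRel fun u v => A u v ≠ 0).Connected)
    (hmin : -Real.sqrt 2 < lmin A) :
    ∃ d : V → ℝ, (∀ i, d i = 1 ∨ d i = -1) ∧
      ∀ u v, d u * A u v * d v = if u = v then 0 else 1 := by
  classical
  have hA : A.IsHermitian := by
    rw [Matrix.IsHermitian, Matrix.conjTranspose_eq_transpose_of_trivial]
    exact hsym
  have hsq : Real.sqrt 2 * Real.sqrt 2 = 2 := Real.mul_self_sqrt (by norm_num)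
  have hsqle : Real.sqrt 2 ≤ 2 := by nlinarith [Real.sqrt_nonneg 2]
  have hs2 : ∀ u v : V, A u v ≠ 0 → A u v * A u v = 1 := by
    intro u v h
    rcases hent u v with h0 | h1 | h1
    · exact absurd h0 h
    · rw [h1]; norm_num
    · rw [h1]; norm_num
  -- No induced path P3
  have hP3 : ∀ u v w : V, u ≠ v → v ≠ w → u ≠ w → A u v ≠ 0 → A v w ≠ 0 → A u w ≠ 0 := by
    intro u v w huv hvw huw hs ht
    intro hr
    obtain ⟨hQ, hN⟩ := quad3 A u v w huv huw hvw (A u v) (-Real.sqrt 2) (A v w)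
    have hray := lmin_rayleigh A hA
      (fun i => if i = u then A u v else if i = v then -Real.sqrt 2 else if i = w then A v w else 0)
    rw [hQ, hN] at hray
    rw [hdiag u, hdiag v, hdiag w, hsym.apply u v, hsym.apply v w, hsym.apply u w, hr] at hray
    have e1 := hs2 u v hs
    have e2 := hs2 v w ht
    have hN4 : A u v * A u v + -Real.sqrt 2 * -Real.sqrt 2 + A v w * A v w = 4 := by
      rw [e1, e2, neg_mul_neg, hsq]; norm_num
    have hQ4 : A u v * (A u v * 0 + -Real.sqrt 2 * A u v + A v w * 0)
        + -Real.sqrt 2 * (A u v * A u v + -Real.sqrt 2 * 0 + A v w * A v w)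
        + A v w * (A u v * 0 + -Real.sqrt 2 * A v w + A v w * 0) = -(4 * Real.sqrt 2) := by
      linear_combination (-2 * Real.sqrt 2) * e1 + (-2 * Real.sqrt 2) * e2
    rw [hN4, hQ4] at hray
    linarith
  -- adjacency in the graph
  set G := SimpleGraph.fromRel fun u v => A u v ≠ 0 with hG
  have hadj : ∀ u v : V, G.Adj u v ↔ u ≠ v ∧ A u v ≠ 0 := by
    intro u v
    rw [hG, SimpleGraph.fromRel_adj]
    constructor
    · rintro ⟨h1, h2 | h2⟩
      · exact ⟨h1, h2⟩
      · exact ⟨h1, by rwa [hsym.apply u v] at h2⟩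
    · rintro ⟨h1, h2⟩; exact ⟨h1, Or.inl h2⟩
  -- connected implies complete
  have hwalk : ∀ {u w : V}, G.Walk u w → u ≠ w → G.Adj u w := by
    intro u w p
    induction p with
    | nil => intro h; exact absurd rfl h
    | @cons a b c h q ih =>
      intro hac
      by_cases hbc : b = c
      · subst hbc; exact h
      · have h2 : G.Adj b c := ih hbc
        have hab := ((hadj a b).mp h).2
        have hbcA := ((hadj b c).mp h2).2
        exact (hadj a c).mpr ⟨hac, hP3 a b c ((hadj a b).mp h).1 hbc hac hab hbcA⟩
  have hcomplete : ∀ u v : V, u ≠ v → A u v ≠ 0 := by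
    intro u v huv
    obtain ⟨p⟩ := hconn.preconnected u v
    exact ((hadj u v).mp (hwalk p huv)).2
  -- all triangles positive
  have htri : ∀ u v w : V, u ≠ v → v ≠ w → u ≠ w → A u v * A v w * A u w = 1 := by
    intro u v w huv hvw huw
    have e1 := hs2 u v (hcomplete u v huv)
    have e2 := hs2 v w (hcomplete v w hvw)
    have e3 := hs2 u w (hcomplete u w huw)
    have hneg : A u v * A v w * A u w = -1 → False := by
      intro hprod
      obtain ⟨hQ, hN⟩ := quad3 A u v w huv huw hvw 1 (-(A u v)) (-(A u w))
      have hray := lmin_rayleigh A hA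
        (fun i => if i = u then (1:ℝ) else if i = v then -(A u v) else if i = w then -(A u w) else 0)
      rw [hQ, hN] at hray
      rw [hdiag u, hdiag v, hdiag w, hsym.apply u v, hsym.apply v w, hsym.apply u w] at hray
      have hN3 : (1 : ℝ) * 1 + -A u v * -A u v + -A u w * -A u w = 3 := by
        linear_combination e1 + e3
      have hQ3 : 1 * (1 * 0 + -A u v * A u v + -A u w * A u w)
          + -A u v * (1 * A u v + -A u v * 0 + -A u w * A v w)
          + -A u w * (1 * A u w + -A u v * A v w + -A u w * 0) = -6 := by
        linear_combination (-2 : ℝ) * e1 + (-2 : ℝ) * e3 + 2 * hprod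
      rw [hN3, hQ3] at hray
      linarith
    rcases hent u v with h1 | h1 | h1 <;> rcases hent v w with h2 | h2 | h2 <;>
      rcases hent u w with h3 | h3 | h3 <;>
      first
        | (exact absurd h1 (hcomplete u v huv))
        | (exact absurd h2 (hcomplete v w hvw))
        | (exact absurd h3 (hcomplete u w huw))
        | (rw [h1, h2, h3]; norm_num; done)
        | (exfalso; apply hneg; rw [h1, h2, h3]; norm_num)
  -- construct the switching
  obtain ⟨v0⟩ := (inferInstance : Nonempty V)
  refine ⟨fun u => if u = v0 then 1 else A v0 u, fun i => ?_, fun u v => ?_⟩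
  · dsimp only
    by_cases h : i = v0
    · simp [h]
    · rw [if_neg h]
      rcases hent v0 i with h0 | h1 | h1
      · exact absurd h0 (hcomplete v0 i (Ne.symm h))
      · exact Or.inl h1
      · exact Or.inr h1
  · by_cases huv : u = v
    · subst huv; simp [hdiag]
    · rw [if_neg huv]
      dsimp only
      by_cases hu : u = v0
      · rw [if_pos hu, one_mul]
        have hv : ¬ v = v0 := by rw [← hu]; exact fun h => huv h.symm
        rw [if_neg hv, hu]
        exact hs2 v0 v (hcomplete v0 v (Ne.symm hv))
      · rw [if_neg hu]
        by_cases hv : v = v0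
        · rw [if_pos hv, mul_one, hv, hsym.apply v0 u]
          exact hs2 v0 u (hcomplete v0 u (Ne.symm hu))
        · rw [if_neg hv]
          have := htri v0 u v (fun h => hu h.symm) huv (fun h => hv h.symm)
          linarith [this]
end

section
/- Let S be a connected signed graph on a finite nonempty vertex set with λ_min(S) ≥ −√2 and minimum degree δ(S) ≥ 3. Then S is switching equivalent to a complete graph (and hence λ_min(S) = −1); that is, there is a diagonal matrix D with ±1 diagonal entries such that D A D = J − I, where A is the adjacency matrix of S. -/
open Filter Matrix

section Aux

variable {V : Type} [Fintype V] [DecidableEq V]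

lemma aux_quadform_ge (A : Matrix V V ℝ) (hA : A.IsHermitian) (c : ℝ)
    (h : ∀ i, c ≤ hA.eigenvalues i) (x : V → ℝ) :
    c * (x ⬝ᵥ x) ≤ x ⬝ᵥ (A *ᵥ x) := by
  set U : Matrix V V ℝ := (hA.eigenvectorUnitary : Matrix V V ℝ) with hU
  have hsU : star U = Uᵀ := by
    rw [Matrix.star_eq_conjTranspose, Matrix.conjTranspose_eq_transpose_of_trivial]
  have h1 : U * Uᵀ = 1 := by
    rw [← hsU]; exact (Matrix.mem_unitaryGroup_iff).mp hA.eigenvectorUnitary.2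
  set y : V → ℝ := Uᵀ *ᵥ x with hy
  have hyy : y ⬝ᵥ y = x ⬝ᵥ x := by
    rw [hy, mulVec_transpose, ← dotProduct_mulVec, mulVec_vecMul, h1, one_mulVec]
  have hAx : x ⬝ᵥ (A *ᵥ x) = ∑ i, hA.eigenvalues i * (y i)^2 := by
    conv_lhs => rw [hA.spectral_theorem, Unitary.conjStarAlgAut_apply]
    rw [hsU, ← mulVec_mulVec, ← mulVec_mulVec, dotProduct_mulVec, ← mulVec_transpose, ← hy]
    simp [dotProduct, mulVec_diagonal]
    ring_nf
    exact Finset.sum_congr rfl fun i _ => mul_comm _ _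
  rw [hAx, ← hyy]
  have : c * (y ⬝ᵥ y) = ∑ i, c * (y i)^2 := by
    simp [dotProduct, Finset.mul_sum]; ring_nf
  rw [this]
  exact Finset.sum_le_sum fun i _ => mul_le_mul_of_nonneg_right (h i) (sq_nonneg _)

lemma aux_eigen_ge (A : Matrix V V ℝ) (hA : A.IsHermitian) (c : ℝ)
    (h : ∀ x : V → ℝ, c * (x ⬝ᵥ x) ≤ x ⬝ᵥ (A *ᵥ x)) (i : V) : c ≤ hA.eigenvalues i := by
  set v : V → ℝ := ⇑(hA.eigenvectorBasis i) with hv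
  have hv0 : v ≠ 0 := fun h => hA.eigenvectorBasis.orthonormal.ne_zero i (by
    ext j; have := congrFun h j; simpa [hv] using this)
  have hvv : 0 < v ⬝ᵥ v := by
    rcases Function.ne_iff.mp hv0 with ⟨j, hj⟩
    have : (0:ℝ) < ∑ k, v k * v k := by
      apply Finset.sum_pos' (fun k _ => mul_self_nonneg _)
      exact ⟨j, Finset.mem_univ j, mul_self_pos.mpr hj⟩
    simpa [dotProduct] using this
  have hAv : A *ᵥ v = hA.eigenvalues i • v := hA.mulVec_eigenvectorBasis i
  have := h v
  rw [hAv, dotProduct_smul] at this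
  have := le_of_mul_le_mul_right (by simpa [mul_comm] using this) hvv
  linarith [this]

lemma aux_quad2 (A : Matrix V V ℝ) (hsym : A.IsSymm) (hdiag : ∀ i, A i i = 0)
    (a b : V) (hab : a ≠ b) (ra rb : ℝ) :
    (Pi.single a ra + Pi.single b rb) ⬝ᵥ (A *ᵥ (Pi.single a ra + Pi.single b rb))
      = 2 * (ra * rb * A a b) ∧
    (Pi.single a ra + Pi.single b rb) ⬝ᵥ (Pi.single a ra + Pi.single b rb) = ra^2 + rb^2 := by
  have hba : A b a = A a b := by rw [← hsym.apply]
  constructor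
  · simp only [mulVec_add, mulVec_single, dotProduct_add, add_dotProduct, single_dotProduct,
      Pi.add_apply, Pi.smul_apply, op_smul_eq_mul, col_apply, hdiag, hba]
    ring
  · simp only [dotProduct_add, add_dotProduct, single_dotProduct, Pi.add_apply,
      Pi.single_eq_same, Pi.single_eq_of_ne hab.symm, Pi.single_eq_of_ne hab]
    ring

lemma aux_quad3 (A : Matrix V V ℝ) (hsym : A.IsSymm) (hdiag : ∀ i, A i i = 0)
    (a b c : V) (hab : a ≠ b) (hac : a ≠ c) (hbc : b ≠ c) (ra rb rc : ℝ) :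
    (Pi.single a ra + Pi.single b rb + Pi.single c rc) ⬝ᵥ
      (A *ᵥ (Pi.single a ra + Pi.single b rb + Pi.single c rc))
      = 2 * (ra * rb * A a b + ra * rc * A a c + rb * rc * A b c) ∧
    (Pi.single a ra + Pi.single b rb + Pi.single c rc) ⬝ᵥ
      (Pi.single a ra + Pi.single b rb + Pi.single c rc) = ra^2 + rb^2 + rc^2 := by
  have h1 : A b a = A a b := by rw [← hsym.apply]
  have h2 : A c a = A a c := by rw [← hsym.apply]
  have h3 : A c b = A b c := by rw [← hsym.apply]
  constructor
  · simp only [mulVec_add, mulVec_single, dotProduct_add, add_dotProduct, single_dotProduct,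
      Pi.add_apply, Pi.smul_apply, op_smul_eq_mul, col_apply, hdiag, h1, h2, h3]
    ring
  · simp only [dotProduct_add, add_dotProduct, single_dotProduct, Pi.add_apply,
      Pi.single_eq_same, Pi.single_eq_of_ne hab.symm, Pi.single_eq_of_ne hab,
      Pi.single_eq_of_ne hac.symm, Pi.single_eq_of_ne hac,
      Pi.single_eq_of_ne hbc.symm, Pi.single_eq_of_ne hbc]
    ring

lemma aux_quad4 (A : Matrix V V ℝ) (hsym : A.IsSymm) (hdiag : ∀ i, A i i = 0)
    (a b c d : V) (hab : a ≠ b) (hac : a ≠ c) (had : a ≠ d) (hbc : b ≠ c) (hbd : b ≠ d)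
    (hcd : c ≠ d) (ra rb rc rd : ℝ) :
    (Pi.single a ra + Pi.single b rb + Pi.single c rc + Pi.single d rd) ⬝ᵥ
      (A *ᵥ (Pi.single a ra + Pi.single b rb + Pi.single c rc + Pi.single d rd))
      = 2 * (ra * rb * A a b + ra * rc * A a c + ra * rd * A a d
          + rb * rc * A b c + rb * rd * A b d + rc * rd * A c d) ∧
    (Pi.single a ra + Pi.single b rb + Pi.single c rc + Pi.single d rd) ⬝ᵥ
      (Pi.single a ra + Pi.single b rb + Pi.single c rc + Pi.single d rd)
      = ra^2 + rb^2 + rc^2 + rd^2 := by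
  have h1 : A b a = A a b := by rw [← hsym.apply]
  have h2 : A c a = A a c := by rw [← hsym.apply]
  have h3 : A c b = A b c := by rw [← hsym.apply]
  have h4 : A d a = A a d := by rw [← hsym.apply]
  have h5 : A d b = A b d := by rw [← hsym.apply]
  have h6 : A d c = A c d := by rw [← hsym.apply]
  constructor
  · simp only [mulVec_add, mulVec_single, dotProduct_add, add_dotProduct, single_dotProduct,
      Pi.add_apply, Pi.smul_apply, op_smul_eq_mul, col_apply, hdiag, h1, h2, h3, h4, h5, h6]
    ring
  · simp only [dotProduct_add, add_dotProduct, single_dotProduct, Pi.add_apply,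
      Pi.single_eq_same, Pi.single_eq_of_ne hab.symm, Pi.single_eq_of_ne hab,
      Pi.single_eq_of_ne hac.symm, Pi.single_eq_of_ne hac,
      Pi.single_eq_of_ne had.symm, Pi.single_eq_of_ne had,
      Pi.single_eq_of_ne hbc.symm, Pi.single_eq_of_ne hbc,
      Pi.single_eq_of_ne hbd.symm, Pi.single_eq_of_ne hbd,
      Pi.single_eq_of_ne hcd.symm, Pi.single_eq_of_ne hcd]
    ring

end Aux

set_option maxHeartbeats 2000000 in
/-- A connected signed graph on a finite nonempty vertex set
with `λ_min ≥ -√2` and minimum degree at least `3` is switching equivalent to a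
complete graph (and hence `λ_min = -1`): `D A D = J - I` for some `±1`
diagonal `D`. -/
theorem statement12 (V : Type) [Fintype V] [DecidableEq V] [Nonempty V]
    (A : Matrix V V ℝ) (hsym : A.IsSymm) (hdiag : ∀ i, A i i = 0)
    (hent : ∀ u v, A u v = 0 ∨ A u v = 1 ∨ A u v = -1)
    (hconn : (SimpleGraph.fromRel fun u v => A u v ≠ 0).Connected)
    (hmin : -Real.sqrt 2 ≤ lmin A)
    (hdeg : 3 ≤ minDeg (SimpleGraph.fromRel fun u v => A u v ≠ 0)) :
    (∃ d : V → ℝ, (∀ i, d i = 1 ∨ d i = -1) ∧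
      ∀ u v, d u * A u v * d v = if u = v then 0 else 1) ∧ lmin A = -1 := by
  classical
  have hA : A.IsHermitian := by
    show Aᴴ = A
    rw [Matrix.conjTranspose_eq_transpose_of_trivial]; exact hsym
  have hlm : lmin A = ⨅ i, hA.eigenvalues i := by unfold lmin; exact dif_pos hA
  have hlmin_le : ∀ i, lmin A ≤ hA.eigenvalues i := by
    intro i; rw [hlm]; exact ciInf_le (Set.Finite.bddBelow (Set.finite_range _)) i
  -- quadratic form bound from λ_min ≥ -√2
  have hq : ∀ x : V → ℝ, -Real.sqrt 2 * (x ⬝ᵥ x) ≤ x ⬝ᵥ (A *ᵥ x) :=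
    aux_quadform_ge A hA _ (fun i => le_trans hmin (hlmin_le i))
  have s2 : Real.sqrt 2 ^ 2 = 2 := Real.sq_sqrt (by norm_num)
  have s2n : (0:ℝ) ≤ Real.sqrt 2 := Real.sqrt_nonneg 2
  have s3 : Real.sqrt 3 ^ 2 = 3 := Real.sq_sqrt (by norm_num)
  have s3n : (0:ℝ) ≤ Real.sqrt 3 := Real.sqrt_nonneg 3
  -- every triangle is positive
  have hT : ∀ u v w : V, u ≠ v → u ≠ w → v ≠ w → A u v ≠ 0 → A u w ≠ 0 → A v w ≠ 0 →
      A u v * A u w * A v w = 1 := by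
    intro u v w huv huw hvw h1 h2 h3
    have e1 := (hent u v).resolve_left h1
    have e2 := (hent u w).resolve_left h2
    have e3 := (hent v w).resolve_left h3
    have hpm : A u v * A u w * A v w = 1 ∨ A u v * A u w * A v w = -1 := by
      rcases e1 with e1 | e1 <;> rcases e2 with e2 | e2 <;> rcases e3 with e3 | e3 <;>
        rw [e1, e2, e3] <;> norm_num
    rcases hpm with hpm | hpm
    · exact hpm
    exfalso
    set x3 : V → ℝ := Pi.single u 1 + Pi.single v (-(A u v)) + Pi.single w (-(A u w)) with hx3
    have hQ := (aux_quad3 A hsym hdiag u v w huv huw hvw 1 (-(A u v)) (-(A u w))).1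
    have hN := (aux_quad3 A hsym hdiag u v w huv huw hvw 1 (-(A u v)) (-(A u w))).2
    rw [← hx3] at hQ hN
    have hle := hq x3
    rcases e1 with e1 | e1 <;> rcases e2 with e2 | e2 <;>
      rw [e1, e2] at hpm <;> norm_num at hpm <;>
      rw [e1, e2, hpm] at hQ <;>
      rw [e1, e2] at hN <;>
      norm_num at hQ hN <;>
      nlinarith [hle, hQ, hN, s2, s2n]
  -- graph setup
  set G : SimpleGraph V := SimpleGraph.fromRel (fun u v => A u v ≠ 0) with hG
  letI instG : DecidableRel G.Adj := Classical.decRel _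
  have hdeg' : ∀ v, 3 ≤ G.degree v := by
    intro v
    have h1 : minDeg G = G.minDegree := rfl
    exact le_trans (h1 ▸ hdeg) (G.minDegree_le_degree v)
  have hAdj : ∀ {u v : V}, G.Adj u v ↔ u ≠ v ∧ A u v ≠ 0 := by
    intro u v
    rw [hG, SimpleGraph.fromRel_adj]
    constructor
    · rintro ⟨h, h' | h'⟩
      · exact ⟨h, h'⟩
      · exact ⟨h, by rwa [hsym.apply]⟩
    · rintro ⟨h, h'⟩; exact ⟨h, Or.inl h'⟩
  -- adjacency is transitive
  have htrans : ∀ p u w : V, p ≠ u → p ≠ w → u ≠ w → A p u ≠ 0 → A p w ≠ 0 → A u w ≠ 0 := by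
    intro p u w hpu hpw huw hApu hApw
    by_contra huw0
    -- find a third neighbor of p
    have h3 : 3 ≤ (G.neighborFinset p).card := hdeg' p
    have hne : ((G.neighborFinset p) \ {u, w}).Nonempty := by
      rw [← Finset.card_pos]
      have h2 : ({u, w} : Finset V).card ≤ 2 :=
        le_trans (Finset.card_insert_le _ _) (by simp)
      have := Finset.le_card_sdiff ({u, w} : Finset V) (G.neighborFinset p)
      omega
    obtain ⟨c, hc⟩ := hne
    rw [Finset.mem_sdiff, SimpleGraph.mem_neighborFinset] at hc
    obtain ⟨hpc, hcnot⟩ := hc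
    simp only [Finset.mem_insert, Finset.mem_singleton, not_or] at hcnot
    obtain ⟨hcu, hcw⟩ := hcnot
    have hApc : A p c ≠ 0 := (hAdj.mp hpc).2
    have hpcne : p ≠ c := (hAdj.mp hpc).1
    have hucne : u ≠ c := fun h => hcu h.symm
    have hwcne : w ≠ c := fun h => hcw h.symm
    have eu := (hent p u).resolve_left hApu
    have ew := (hent p w).resolve_left hApw
    have ec := (hent p c).resolve_left hApc
    by_cases huc : A u c = 0 <;> by_cases hwc : A w c = 0
    · -- star K₁,₃
      have hQ := (aux_quad4 A hsym hdiag p u w c hpu hpw hpcne huw hucne hwcne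
        (-(7/4)) (A p u) (A p w) (A p c)).1
      have hN := (aux_quad4 A hsym hdiag p u w c hpu hpw hpcne huw hucne hwcne
        (-(7/4)) (A p u) (A p w) (A p c)).2
      have hle := hq (Pi.single p (-(7/4)) + Pi.single u (A p u) + Pi.single w (A p w)
        + Pi.single c (A p c))
      set xx : V → ℝ := Pi.single p (-(7/4)) + Pi.single u (A p u) + Pi.single w (A p w)
        + Pi.single c (A p c) with hxx
      clear_value xx
      rw [huw0, huc, hwc] at hQ
      rcases eu with eu | eu <;> rcases ew with ew | ew <;> rcases ec with ec | ec <;>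
        rw [eu, ew, ec] at hQ hN <;> norm_num at hN <;>
        rw [hN] at hle <;> nlinarith [hle, hQ, s2, s2n]
    · -- paw with triangle p w c and pendant u
      have hTri := hT p w c hpw hpcne hwcne hApw hApc hwc
      have hQ := (aux_quad4 A hsym hdiag u p w c (Ne.symm hpu) huw hucne hpw hpcne hwcne
        ((5/3) * A p u) (-(5/2)) (A p w) (A p c)).1
      have hN := (aux_quad4 A hsym hdiag u p w c (Ne.symm hpu) huw hucne hpw hpcne hwcne
        ((5/3) * A p u) (-(5/2)) (A p w) (A p c)).2
      have hle := hq (Pi.single u ((5/3) * A p u) + Pi.single p (-(5/2)) + Pi.single w (A p w)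
        + Pi.single c (A p c))
      set xx : V → ℝ := Pi.single u ((5/3) * A p u) + Pi.single p (-(5/2)) + Pi.single w (A p w)
        + Pi.single c (A p c) with hxx
      clear_value xx
      rw [← hsym.apply u p, huw0, huc] at hQ
      rcases eu with eu | eu <;> rcases ew with ew | ew <;> rcases ec with ec | ec <;>
        rw [eu, ew, ec] at hQ hN <;> rw [ew, ec] at hTri <;> norm_num at hN <;>
        rw [hN] at hle <;> nlinarith [hle, hQ, hTri, s2, s2n]
    · -- paw with triangle p u c and pendant w
      have hTri := hT p u c hpu hpcne hucne hApu hApc huc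
      have hQ := (aux_quad4 A hsym hdiag w p u c (Ne.symm hpw) (Ne.symm huw) hwcne hpu hpcne hucne
        ((5/3) * A p w) (-(5/2)) (A p u) (A p c)).1
      have hN := (aux_quad4 A hsym hdiag w p u c (Ne.symm hpw) (Ne.symm huw) hwcne hpu hpcne hucne
        ((5/3) * A p w) (-(5/2)) (A p u) (A p c)).2
      have hle := hq (Pi.single w ((5/3) * A p w) + Pi.single p (-(5/2)) + Pi.single u (A p u)
        + Pi.single c (A p c))
      set xx : V → ℝ := Pi.single w ((5/3) * A p w) + Pi.single p (-(5/2)) + Pi.single u (A p u)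
        + Pi.single c (A p c) with hxx
      clear_value xx
      have hwu : A w u = 0 := by rw [hsym.apply]; exact huw0
      rw [← hsym.apply w p, hwu, hwc] at hQ
      rcases eu with eu | eu <;> rcases ew with ew | ew <;> rcases ec with ec | ec <;>
        rw [eu, ew, ec] at hQ hN <;> rw [eu, ec] at hTri <;> norm_num at hN <;>
        rw [hN] at hle <;> nlinarith [hle, hQ, hTri, s2, s2n]
    · -- diamond
      have hTri1 := hT p u c hpu hpcne hucne hApu hApc huc
      have hTri2 := hT p w c hpw hpcne hwcne hApw hApc hwc
      have hQ := (aux_quad4 A hsym hdiag p u w c hpu hpw hpcne huw hucne hwcne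
        (-(4/5)) (A p u) (A p w) (-(4/5) * A p c)).1
      have hN := (aux_quad4 A hsym hdiag p u w c hpu hpw hpcne huw hucne hwcne
        (-(4/5)) (A p u) (A p w) (-(4/5) * A p c)).2
      have hle := hq (Pi.single p (-(4/5)) + Pi.single u (A p u) + Pi.single w (A p w)
        + Pi.single c (-(4/5) * A p c))
      set xx : V → ℝ := Pi.single p (-(4/5)) + Pi.single u (A p u) + Pi.single w (A p w)
        + Pi.single c (-(4/5) * A p c) with hxx
      clear_value xx
      rw [huw0] at hQ
      rcases eu with eu | eu <;> rcases ew with ew | ew <;> rcases ec with ec | ec <;>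
        rw [eu, ew, ec] at hQ hN <;> rw [eu, ec] at hTri1 <;> rw [ew, ec] at hTri2 <;>
        norm_num at hN <;>
        rw [hN] at hle <;> nlinarith [hle, hQ, hTri1, hTri2, s2, s2n]
  -- the underlying graph is complete
  have hcomp : ∀ u w : V, u ≠ w → A u w ≠ 0 := by
    have key : ∀ u w : V, ∀ _ : G.Walk u w, u ≠ w → A u w ≠ 0 := by
      intro u w pw
      induction pw with
      | nil => intro h; exact absurd rfl h
      | @cons a b c hadj pw ih =>
        intro hac
        by_cases hbc : b = c
        · subst hbc; exact (hAdj.mp hadj).2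
        · have h1 : A a b ≠ 0 := (hAdj.mp hadj).2
          have hab : a ≠ b := (hAdj.mp hadj).1
          have h2 : A b c ≠ 0 := ih hbc
          have h3 : A b a ≠ 0 := by rw [hsym.apply]; exact h1
          exact htrans b a c (Ne.symm hab) hbc hac h3 h2
    intro u w huw
    obtain ⟨pw⟩ := hconn.preconnected u w
    exact key u w pw huw
  -- construct the switching function
  obtain ⟨v0⟩ := ‹Nonempty V›
  set d : V → ℝ := fun u => if u = v0 then 1 else A v0 u with hd
  have hd1 : ∀ i, d i = 1 ∨ d i = -1 := by
    intro i
    by_cases h : i = v0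
    · left; simp [hd, h]
    · have := (hent v0 i).resolve_left (hcomp v0 i (Ne.symm h))
      simpa [hd, h] using this
  have hprop : ∀ u v, d u * A u v * d v = if u = v then 0 else 1 := by
    intro u v
    by_cases huv : u = v
    · subst huv; simp [hdiag]
    · rw [if_neg huv]
      by_cases hu : u = v0
      · have hv : v ≠ v0 := fun h => huv (hu.trans h.symm)
        rw [hu]
        simp only [hd, if_pos rfl, if_neg hv]
        have h0 : A v0 v ≠ 0 := hcomp v0 v (Ne.symm hv)
        rcases (hent v0 v).resolve_left h0 with h | h <;> rw [h] <;> norm_num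
      · by_cases hv : v = v0
        · rw [hv]
          simp only [hd, if_neg hu, if_pos rfl]
          rw [← hsym.apply u v0]
          have h0 : A v0 u ≠ 0 := hcomp v0 u (Ne.symm hu)
          rcases (hent v0 u).resolve_left h0 with h | h <;> rw [h] <;> norm_num
        · simp only [hd, if_neg hu, if_neg hv]
          have hTuv := hT v0 u v (Ne.symm hu) (Ne.symm hv) huv (hcomp v0 u (Ne.symm hu))
            (hcomp v0 v (Ne.symm hv)) (hcomp u v huv)
          linear_combination hTuv
  refine ⟨⟨d, hd1, hprop⟩, ?_⟩
  have hd2 : ∀ u, d u * d u = 1 := fun u => by rcases hd1 u with h | h <;> rw [h] <;> norm_num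
  -- quadratic form is bounded below by -‖x‖²
  have hform : ∀ x : V → ℝ, -1 * (x ⬝ᵥ x) ≤ x ⬝ᵥ (A *ᵥ x) := by
    intro x
    set y : V → ℝ := fun u => d u * x u with hy
    have hAuv : ∀ u v, A u v = d u * d v * (if u = v then 0 else 1) := by
      intro u v
      have h := hprop u v
      calc A u v = (d u * d u) * A u v * (d v * d v) := by rw [hd2 u, hd2 v]; ring
        _ = d u * (d u * A u v * d v) * d v := by ring
        _ = d u * (if u = v then 0 else 1) * d v := by rw [h]
        _ = d u * d v * (if u = v then 0 else 1) := by ring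
    have hxAx : x ⬝ᵥ (A *ᵥ x) = (∑ u, y u) * (∑ u, y u) - ∑ u, (y u * y u) := by
      calc x ⬝ᵥ (A *ᵥ x) = ∑ u, ∑ v, x u * (A u v * x v) := by
            simp [dotProduct, mulVec, Finset.mul_sum]
        _ = ∑ u, ∑ v, (y u * y v - if u = v then y u * y v else 0) := by
            refine Finset.sum_congr rfl fun u _ => Finset.sum_congr rfl fun v _ => ?_
            rw [hAuv u v]
            simp only [hy]
            by_cases h : u = v
            · rw [if_pos h, if_pos h]; ring
            · rw [if_neg h, if_neg h]; ring
        _ = (∑ u, y u) * (∑ u, y u) - ∑ u, (y u * y u) := by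
            have e1 : ∀ u : V, ∑ v, (if u = v then y u * y v else 0) = y u * y u := by
              intro u; simp [Finset.sum_ite_eq]
            simp only [Finset.sum_sub_distrib, e1]
            rw [← Fintype.sum_mul_sum]
    have hsum : ∑ u, (y u * y u) = x ⬝ᵥ x := by
      simp only [dotProduct]
      refine Finset.sum_congr rfl fun u _ => ?_
      simp only [hy]
      rcases hd1 u with h | h <;> rw [h] <;> ring
    rw [hxAx, ← hsum]
    nlinarith [mul_self_nonneg (∑ u, y u)]
  have hge : -1 ≤ lmin A := by
    rw [hlm]; exact le_ciInf (aux_eigen_ge A hA (-1) hform)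
  -- a vector achieving -1
  have h3v0 : 3 ≤ (G.neighborFinset v0).card := hdeg' v0
  have hnon : (G.neighborFinset v0).Nonempty := Finset.card_pos.mp (by omega)
  obtain ⟨qv, hqv⟩ := hnon
  rw [SimpleGraph.mem_neighborFinset] at hqv
  have hv0q : v0 ≠ qv := (hAdj.mp hqv).1
  have hQ := (aux_quad2 A hsym hdiag v0 qv hv0q (d v0) (-(d qv))).1
  have hN := (aux_quad2 A hsym hdiag v0 qv hv0q (d v0) (-(d qv))).2
  have hle := aux_quadform_ge A hA (lmin A) hlmin_le
    (Pi.single v0 (d v0) + Pi.single qv (-(d qv)))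
  have hPQ : d v0 * A v0 qv * d qv = 1 := by
    have := hprop v0 qv; rwa [if_neg hv0q] at this
  have hQ' : 2 * (d v0 * -(d qv) * A v0 qv) = -2 := by linear_combination (-2 : ℝ) * hPQ
  have hN' : (d v0)^2 + (-(d qv))^2 = 2 := by
    rcases hd1 v0 with h | h <;> rcases hd1 qv with h' | h' <;> rw [h, h'] <;> norm_num
  rw [hQ, hQ', hN, hN'] at hle
  linarith [hge, hle]
end
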